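/- arXiv:2508.07559 — 3 statements merged into one kernel-verified Lean document; each statement's English description precedes it below -/
import Mathlib

section
/- For all n ≥ 0 and all k, k' ∈ ℕ^d, the inequality 1 + π^n (‖k‖ + ‖k'‖)^n ≤ (1 + π^n ‖k‖^n)(1 + π^n ‖k'‖^n) holds, where ‖·‖ is the Euclidean norm. -/
open Real

/-- Euclidean norm of a multi-index `k ∈ ℕ^d`. -/
noncomputable def knorm (d : ℕ) (k : Fin d → ℕ) : ℝ :=
  Real.sqrt (∑ i, (k i : ℝ)^2)

lemma knorm_nonneg (d : ℕ) (k : Fin d → ℕ) : 0 ≤ knorm d k := Real.sqrt_nonneg _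

lemma knorm_zero_or_one_le (d : ℕ) (k : Fin d → ℕ) :
    knorm d k = 0 ∨ 1 ≤ knorm d k := by
  have hcast : (∑ i, (k i : ℝ)^2) = ((∑ i, (k i)^2 : ℕ) : ℝ) := by
    push_cast; ring
  rcases Nat.eq_zero_or_pos (∑ i, (k i)^2) with h | h
  · left
    simp [knorm, hcast, h]
  · right
    rw [knorm, hcast]
    rw [show (1:ℝ) = Real.sqrt 1 from (Real.sqrt_one).symm]
    apply Real.sqrt_le_sqrt
    exact_mod_cast h

/-- for all `n ≥ 0` and `k, k' ∈ ℕ^d`,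
`1 + π^n (‖k‖+‖k'‖)^n ≤ (1 + π^n ‖k‖^n)(1 + π^n ‖k'‖^n)`. -/
theorem stmt10 (d : ℕ) (n : ℝ) (hn : 0 ≤ n) (k k' : Fin d → ℕ) :
    1 + π ^ n * (knorm d k + knorm d k') ^ n ≤
      (1 + π ^ n * knorm d k ^ n) * (1 + π ^ n * knorm d k' ^ n) := by
  set a := knorm d k with ha
  set b := knorm d k' with hb
  have ha0 : 0 ≤ a := knorm_nonneg d k
  have hb0 : 0 ≤ b := knorm_nonneg d k'
  have hπ : (0:ℝ) < π := Real.pi_pos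
  have hπn : (0:ℝ) ≤ π ^ n := Real.rpow_nonneg hπ.le n
  rcases hn.lt_or_eq with hn' | hn'
  · -- n > 0
    rcases knorm_zero_or_one_le d k with hA | hA
    · rw [← ha] at hA
      rw [hA, Real.zero_rpow hn'.ne', zero_add]
      nlinarith [Real.rpow_nonneg hb0 n]
    · rcases knorm_zero_or_one_le d k' with hB | hB
      · rw [← hb] at hB
        rw [hB, Real.zero_rpow hn'.ne', add_zero]
        nlinarith [Real.rpow_nonneg ha0 n]
      · rw [← ha] at hA
        rw [← hb] at hB
        have hab1 : (1:ℝ) ≤ a * b := by nlinarith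
        have hab : a + b ≤ π * a * b := by
          nlinarith [Real.pi_gt_three, mul_nonneg (sub_nonneg.2 hA) (sub_nonneg.2 hB),
            mul_nonneg (by linarith [Real.pi_gt_three] : (0:ℝ) ≤ π - 3) (by positivity : (0:ℝ) ≤ a*b)]
        have h1 : (a + b) ^ n ≤ (π * a * b) ^ n :=
          Real.rpow_le_rpow (by linarith) hab hn
        have h2 : (π * a * b) ^ n = π ^ n * a ^ n * b ^ n := by
          rw [Real.mul_rpow (by positivity) hb0, Real.mul_rpow hπ.le ha0]
        have h3 : π ^ n * (a + b) ^ n ≤ π ^ n * (π ^ n * a ^ n * b ^ n) := by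
          apply mul_le_mul_of_nonneg_left _ hπn
          rw [← h2]; exact h1
        nlinarith [Real.rpow_nonneg ha0 n, Real.rpow_nonneg hb0 n]
  · subst hn'
    simp [Real.rpow_zero]
end

section
/- Suppose c ∈ B_c^2(Ω) and u ∈ B_s^2(Ω). Then ‖(I−Δ)_D^{-1}(cu)‖_{B_s^2(Ω)} ≤ ‖c‖_{B_c^2(Ω)} ‖u‖_{B_s^2(Ω)}. -/
open MeasureTheory Real

/-- The open unit hypercube `(0,1)^d` in `ℝ^d`. -/
noncomputable def unitCube (d : ℕ) : Set (EuclideanSpace ℝ (Fin d)) :=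
  WithLp.ofLp ⁻¹' Set.univ.pi fun _ => Set.Ioo (0:ℝ) 1

/-- `S_k(x) = ∏_{i=1}^d sin(π k_i x_i)`. -/
noncomputable def Sfun (d : ℕ) (k : Fin d → ℕ) (x : EuclideanSpace ℝ (Fin d)) : ℝ :=
  ∏ i, Real.sin (π * k i * x i)

/-- `C_k(x) = ∏_{i=1}^d cos(π k_i x_i)`. -/
noncomputable def Cfun (d : ℕ) (k : Fin d → ℕ) (x : EuclideanSpace ℝ (Fin d)) : ℝ :=
  ∏ i, Real.cos (π * k i * x i)

/-- A (C¹) member of `H_0^1((0,1)^d)`. -/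
def MemH01 (d : ℕ) (φ : EuclideanSpace ℝ (Fin d) → ℝ) : Prop :=
  ContDiff ℝ 1 φ ∧ (∀ x ∈ frontier (unitCube d), φ x = 0) ∧
    MemLp φ 2 (volume.restrict (unitCube d)) ∧
    MemLp (fun x => gradient φ x) 2 (volume.restrict (unitCube d))

/-- `w` is a weak solution of `(I - Δ) w = φ` with homogeneous Dirichlet boundary
conditions on the unit cube. -/
def IsWeakSolD (d : ℕ) (φ w : EuclideanSpace ℝ (Fin d) → ℝ) : Prop :=
  MemH01 d w ∧ ∀ v : EuclideanSpace ℝ (Fin d) → ℝ, MemH01 d v →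
    (∫ x in unitCube d, (w x * v x + (inner ℝ (gradient w x) (gradient v x) : ℝ))) =
      ∫ x in unitCube d, φ x * v x

namespace St14

variable {d : ℕ}

noncomputable def wt (d : ℕ) (m : Fin d → ℕ) : ℝ := 1 + π^2 * knorm d m ^ 2

lemma knorm_sq (m : Fin d → ℕ) : knorm d m ^ 2 = ∑ i, (m i : ℝ)^2 :=
  Real.sq_sqrt (by positivity)

lemma one_le_wt (m : Fin d → ℕ) : 1 ≤ wt d m := by
  have : 0 ≤ π^2 * knorm d m ^ 2 := by positivity
  simp only [wt]; linarith

lemma wt_pos (m : Fin d → ℕ) : 0 < wt d m := lt_of_lt_of_le one_pos (one_le_wt m)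

lemma wt_nonneg (m : Fin d → ℕ) : 0 ≤ wt d m := (wt_pos m).le

lemma wt_ne_zero (m : Fin d → ℕ) : wt d m ≠ 0 := (wt_pos m).ne'

/-- Index type for the expansion of the product of two trigonometric series. -/
abbrev PP (d : ℕ) := ((Fin d → ℕ) × (Fin d → ℕ)) × (Fin d → Bool)

/-- The multi-index attached to an expansion term. -/
def pidx (p : PP d) : Fin d → ℕ := fun i =>
  if p.2 i then p.1.2 i + p.1.1 i else ((p.1.2 i : ℤ) - (p.1.1 i : ℤ)).natAbs

/-- The sign attached to an expansion term. -/
def psgn (p : PP d) : ℝ :=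
  ∏ i, if p.2 i then (1:ℝ) else (if p.1.1 i ≤ p.1.2 i then (1:ℝ) else -1)

lemma abs_psgn (p : PP d) : |psgn p| = 1 := by
  rw [psgn, Finset.abs_prod]
  refine Finset.prod_eq_one fun i _ => ?_
  rcases Bool.eq_false_or_eq_true (p.2 i) with h | h <;> simp [h] <;> split <;> simp

noncomputable def pcoeff (b a : (Fin d → ℕ) → ℝ) (p : PP d) : ℝ :=
  (2^d : ℝ)⁻¹ * psgn p * b p.1.1 * a p.1.2 / wt d (pidx p)

lemma abs_pcoeff_mul_wt (b a : (Fin d → ℕ) → ℝ) (p : PP d) :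
    |pcoeff b a p| * wt d (pidx p) = (2^d : ℝ)⁻¹ * (|b p.1.1| * |a p.1.2|) := by
  have h1 : |pcoeff b a p| = (2^d : ℝ)⁻¹ * (|b p.1.1| * |a p.1.2|) / wt d (pidx p) := by
    rw [pcoeff, abs_div, abs_mul, abs_mul, abs_mul, abs_psgn, abs_of_nonneg (wt_nonneg _),
      abs_of_nonneg (by positivity : (0:ℝ) ≤ (2^d : ℝ)⁻¹)]
    ring
  rw [h1, div_mul_cancel₀ _ (wt_ne_zero _)]

lemma abs_pcoeff_le (b a : (Fin d → ℕ) → ℝ) (p : PP d) :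
    |pcoeff b a p| ≤ (2^d : ℝ)⁻¹ * (|b p.1.1| * |a p.1.2|) := by
  rw [← abs_pcoeff_mul_wt b a p]
  exact le_mul_of_one_le_right (abs_nonneg _) (one_le_wt _)

/-- The sine coefficients of `(I-Δ)⁻¹(cu)`. -/
noncomputable def ecoef (b a : (Fin d → ℕ) → ℝ) (m : Fin d → ℕ) : ℝ :=
  ∑' p : (pidx ⁻¹' {m} : Set (PP d)), pcoeff b a p

section Summability

variable {b a : (Fin d → ℕ) → ℝ}
variable (hb : Summable (fun k : Fin d → ℕ => |b k| * (1 + π^2 * knorm d k ^ 2)))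
variable (ha : Summable (fun k : Fin d → ℕ => |a k| * (1 + π^2 * knorm d k ^ 2)))

lemma abs_le_abs_mul_wt (b : (Fin d → ℕ) → ℝ) (k : Fin d → ℕ) :
    |b k| ≤ |b k| * wt d k :=
  le_mul_of_one_le_right (abs_nonneg _) (one_le_wt _)

include hb in
lemma summable_abs_b : Summable (fun k => |b k|) := by
  refine Summable.of_nonneg_of_le (fun k => abs_nonneg _) (fun k => abs_le_abs_mul_wt b k) ?_
  exact hb

include hb ha in
lemma summable_Q :
    Summable (fun p : PP d => (2^d : ℝ)⁻¹ * (|b p.1.1| * |a p.1.2|)) := by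
  have hprod : Summable (fun jk : (Fin d → ℕ) × (Fin d → ℕ) => |b jk.1| * |a jk.2|) :=
    (summable_abs_b hb).mul_of_nonneg (summable_abs_b ha)
      (fun k => abs_nonneg _) (fun k => abs_nonneg _)
  have h0 : (0:ℝ) ≤ (2^d : ℝ)⁻¹ := by positivity
  refine (summable_prod_of_nonneg ?_).2 ⟨fun jk => Summable.of_finite, ?_⟩
  · intro p; positivity
  · apply Summable.of_nonneg_of_le (fun jk => tsum_nonneg fun ε => by positivity)
      (fun jk => ?_) (hprod.mul_left ((2^d : ℝ)⁻¹ * (2^d : ℝ)))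
    rw [tsum_fintype]
    refine le_of_eq ?_
    have : ∀ ε : Fin d → Bool, (2^d : ℝ)⁻¹ * (|b ((jk, ε)).1.1| * |a ((jk, ε)).1.2|) =
        (2^d : ℝ)⁻¹ * (|b jk.1| * |a jk.2|) := fun ε => rfl
    rw [Finset.sum_congr rfl (fun ε _ => this ε), Finset.sum_const, nsmul_eq_mul]
    have hcard : (Finset.univ.card (α := Fin d → Bool) : ℝ) = 2^d := by
      simp [Finset.card_univ]
    rw [hcard]; ring

include hb ha in
lemma summable_q :
    Summable (fun p : PP d => |pcoeff b a p| * wt d (pidx p)) := by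
  have := summable_Q hb ha
  refine this.congr fun p => (abs_pcoeff_mul_wt b a p).symm

include hb ha in
lemma summable_abs_pcoeff : Summable (fun p : PP d => |pcoeff b a p|) := by
  refine Summable.of_nonneg_of_le (fun p => abs_nonneg _)
    (fun p => le_mul_of_one_le_right (abs_nonneg _) (one_le_wt _)) (summable_q hb ha)

include hb ha in
lemma summable_pcoeff : Summable (pcoeff b a) :=
  Summable.of_norm (by simpa [Real.norm_eq_abs] using summable_abs_pcoeff hb ha)

include hb ha in
lemma abs_ecoef_le (m : Fin d → ℕ) :
    |ecoef b a m| ≤ ∑' p : (pidx ⁻¹' {m} : Set (PP d)), |pcoeff b a p| := by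
  have := norm_tsum_le_tsum_norm (f := fun p : (pidx ⁻¹' {m} : Set (PP d)) => pcoeff b a p)
    (by simp only [Real.norm_eq_abs]; exact (summable_abs_pcoeff hb ha).subtype _)
  simpa [Real.norm_eq_abs, ecoef] using this

include hb ha in
lemma hasSum_fiber_q :
    HasSum (fun m : Fin d → ℕ => (∑' p : (pidx ⁻¹' {m} : Set (PP d)), |pcoeff b a p|) * wt d m)
      (∑' p : PP d, |pcoeff b a p| * wt d (pidx p)) := by
  have h := ((summable_q hb ha).hasSum).tsum_fiberwise pidx
  have hfun : (fun m : Fin d → ℕ =>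
      (∑' p : (pidx ⁻¹' {m} : Set (PP d)), |pcoeff b a p|) * wt d m) =
      fun m : Fin d → ℕ =>
        ∑' p : (pidx ⁻¹' {m} : Set (PP d)), (|pcoeff b a p| * wt d (pidx (p : PP d))) := by
    funext m
    rw [← tsum_mul_right]
    exact tsum_congr fun p => by rw [Set.mem_singleton_iff.1 p.2]
  rw [hfun]
  exact h

include hb ha in
lemma summable_ecoef_wt :
    Summable (fun m : Fin d → ℕ => |ecoef b a m| * wt d m) := by
  refine Summable.of_nonneg_of_le (fun m => mul_nonneg (abs_nonneg _) (wt_nonneg _))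
    (fun m => mul_le_mul_of_nonneg_right (abs_ecoef_le hb ha m) (wt_nonneg m))
    (hasSum_fiber_q hb ha).summable

set_option maxHeartbeats 1000000 in
include hb ha in
lemma tsum_ecoef_wt_le :
    (∑' m : Fin d → ℕ, |ecoef b a m| * wt d m) ≤
      (∑' k, |b k| * wt d k) * (∑' k, |a k| * wt d k) := by
  have h1 : (∑' m : Fin d → ℕ, |ecoef b a m| * wt d m) ≤
      ∑' p : PP d, |pcoeff b a p| * wt d (pidx p) := by
    rw [← (hasSum_fiber_q hb ha).tsum_eq]
    exact Summable.tsum_le_tsum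
      (fun m => mul_le_mul_of_nonneg_right (abs_ecoef_le hb ha m) (wt_nonneg m))
      (summable_ecoef_wt hb ha) (hasSum_fiber_q hb ha).summable
  have h2 : (∑' p : PP d, |pcoeff b a p| * wt d (pidx p)) =
      (∑' k, |b k|) * (∑' k, |a k|) := by
    have hQ := summable_Q hb ha
    calc (∑' p : PP d, |pcoeff b a p| * wt d (pidx p))
        = ∑' p : PP d, (2^d : ℝ)⁻¹ * (|b p.1.1| * |a p.1.2|) :=
          tsum_congr fun p => abs_pcoeff_mul_wt b a p
      _ = ∑' jk : (Fin d → ℕ) × (Fin d → ℕ), ∑' ε : Fin d → Bool,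
            (2^d : ℝ)⁻¹ * (|b jk.1| * |a jk.2|) := Summable.tsum_prod' hQ (fun jk => Summable.of_finite)
      _ = ∑' jk : (Fin d → ℕ) × (Fin d → ℕ), |b jk.1| * |a jk.2| := by
          refine tsum_congr fun jk => ?_
          rw [tsum_fintype, Finset.sum_const, nsmul_eq_mul]
          have : (Finset.univ.card (α := Fin d → Bool) : ℝ) = 2^d := by
            simp [Finset.card_univ]
          rw [this]
          field_simp
      _ = (∑' k, |b k|) * (∑' k, |a k|) := by
          exact (Summable.tsum_mul_tsum (summable_abs_b hb) (summable_abs_b ha)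
            ((summable_abs_b hb).mul_of_nonneg (summable_abs_b ha)
              (fun k => abs_nonneg _) (fun k => abs_nonneg _))).symm
  have h3 : (∑' k, |b k|) * (∑' k, |a k|) ≤ (∑' k, |b k| * wt d k) * (∑' k, |a k| * wt d k) := by
    have hbl : (∑' k, |b k|) ≤ ∑' k, |b k| * wt d k :=
      Summable.tsum_le_tsum (abs_le_abs_mul_wt b) (summable_abs_b hb) hb
    have hal : (∑' k, |a k|) ≤ ∑' k, |a k| * wt d k :=
      Summable.tsum_le_tsum (abs_le_abs_mul_wt a) (summable_abs_b ha) ha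
    exact mul_le_mul hbl hal (tsum_nonneg fun k => abs_nonneg _)
      (tsum_nonneg fun k => mul_nonneg (abs_nonneg _) (wt_nonneg _))
  calc _ ≤ _ := h1
    _ = _ := h2
    _ ≤ _ := h3

end Summability

end St14

namespace St14

variable {d : ℕ}

lemma abs_Sfun_le_one (m : Fin d → ℕ) (x : EuclideanSpace ℝ (Fin d)) : |Sfun d m x| ≤ 1 := by
  rw [Sfun, Finset.abs_prod]
  exact Finset.prod_le_one (fun i _ => abs_nonneg _) (fun i _ => Real.abs_sin_le_one _)

lemma abs_Cfun_le_one (m : Fin d → ℕ) (x : EuclideanSpace ℝ (Fin d)) : |Cfun d m x| ≤ 1 := by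
  rw [Cfun, Finset.abs_prod]
  exact Finset.prod_le_one (fun i _ => abs_nonneg _) (fun i _ => Real.abs_cos_le_one _)

lemma cos_mul_sin (j k : ℕ) (t : ℝ) :
    Real.cos (π * j * t) * Real.sin (π * k * t) =
      ∑ ε : Bool,
        if ε then (1/2 : ℝ) * ((1:ℝ) * Real.sin (π * ((k + j : ℕ) : ℝ) * t))
        else (1/2 : ℝ) * ((if j ≤ k then (1:ℝ) else -1) *
          Real.sin (π * ((((k:ℤ) - (j:ℤ)).natAbs : ℕ) : ℝ) * t)) := by
  rw [Fintype.sum_bool]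
  rw [if_pos rfl, if_neg (by simp : ¬ (false = true))]
  rcases le_or_gt j k with h | h
  · have hn : (((k:ℤ) - (j:ℤ)).natAbs : ℝ) = (k : ℝ) - (j : ℝ) := by
      have : ((k:ℤ) - (j:ℤ)).natAbs = k - j := by omega
      rw [this, Nat.cast_sub h]
    have e1 : π * ((k + j : ℕ) : ℝ) * t = π * k * t + π * j * t := by push_cast; ring
    have e2 : π * ((((k:ℤ) - (j:ℤ)).natAbs : ℕ) : ℝ) * t = π * k * t - π * j * t := by
      rw [hn]; ring
    rw [e1, e2, Real.sin_add, Real.sin_sub, if_pos h]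
    ring
  · have hn : (((k:ℤ) - (j:ℤ)).natAbs : ℝ) = (j : ℝ) - (k : ℝ) := by
      have : ((k:ℤ) - (j:ℤ)).natAbs = j - k := by omega
      rw [this, Nat.cast_sub h.le]
    have e1 : π * ((k + j : ℕ) : ℝ) * t = π * k * t + π * j * t := by push_cast; ring
    have e2 : π * ((((k:ℤ) - (j:ℤ)).natAbs : ℕ) : ℝ) * t = π * j * t - π * k * t := by
      rw [hn]; ring
    rw [e1, e2, Real.sin_add, Real.sin_sub, if_neg (not_le.2 h)]
    ring

lemma Cfun_mul_Sfun (j k : Fin d → ℕ) (x : EuclideanSpace ℝ (Fin d)) :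
    Cfun d j x * Sfun d k x =
      ∑ ε : Fin d → Bool, (2^d : ℝ)⁻¹ * psgn ((j,k),ε) * Sfun d (pidx ((j,k),ε)) x := by
  classical
  rw [Cfun, Sfun, ← Finset.prod_mul_distrib]
  have step1 : ∀ i : Fin d, Real.cos (π * j i * x i) * Real.sin (π * k i * x i) =
      ∑ ε : Bool,
        if ε then (1/2 : ℝ) * ((1:ℝ) * Real.sin (π * ((k i + j i : ℕ) : ℝ) * x i))
        else (1/2 : ℝ) * ((if j i ≤ k i then (1:ℝ) else -1) *
          Real.sin (π * ((((k i:ℤ) - (j i:ℤ)).natAbs : ℕ) : ℝ) * x i)) :=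
    fun i => cos_mul_sin (j i) (k i) (x i)
  rw [Finset.prod_congr rfl (fun i _ => step1 i), Fintype.prod_sum]
  refine Finset.sum_congr rfl fun ε _ => ?_
  have step2 : ∀ i : Fin d,
      (if ε i then (1/2 : ℝ) * ((1:ℝ) * Real.sin (π * ((k i + j i : ℕ) : ℝ) * x i))
        else (1/2 : ℝ) * ((if j i ≤ k i then (1:ℝ) else -1) *
          Real.sin (π * ((((k i:ℤ) - (j i:ℤ)).natAbs : ℕ) : ℝ) * x i))) =
      (1/2 : ℝ) * ((if ε i then (1:ℝ) else if j i ≤ k i then (1:ℝ) else -1) *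
        Real.sin (π * ((pidx ((j,k),ε) i : ℕ) : ℝ) * x i)) := by
    intro i
    rcases Bool.eq_false_or_eq_true (ε i) with h | h <;> simp only [pidx, h] <;> simp
  rw [Finset.prod_congr rfl (fun i _ => step2 i), Finset.prod_mul_distrib,
    Finset.prod_mul_distrib]
  have e1 : (∏ _i : Fin d, (1/2 : ℝ)) = (2^d : ℝ)⁻¹ := by
    rw [Finset.prod_const, Finset.card_univ, Fintype.card_fin]
    rw [one_div, inv_pow]
  rw [e1, mul_assoc]
  rfl

section Pointwise

variable {b a : (Fin d → ℕ) → ℝ}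
variable (hb : Summable (fun k : Fin d → ℕ => |b k| * (1 + π^2 * knorm d k ^ 2)))
variable (ha : Summable (fun k : Fin d → ℕ => |a k| * (1 + π^2 * knorm d k ^ 2)))

include hb in
lemma summable_bC (x : EuclideanSpace ℝ (Fin d)) : Summable fun j => b j * Cfun d j x := by
  refine Summable.of_norm (Summable.of_nonneg_of_le (fun j => norm_nonneg _)
    (fun j => ?_) (summable_abs_b hb))
  rw [Real.norm_eq_abs, abs_mul]
  exact mul_le_of_le_one_right (abs_nonneg _) (abs_Cfun_le_one _ _)

include ha in
lemma summable_aS (x : EuclideanSpace ℝ (Fin d)) : Summable fun j => a j * Sfun d j x := by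
  refine Summable.of_norm (Summable.of_nonneg_of_le (fun j => norm_nonneg _)
    (fun j => ?_) (summable_abs_b ha))
  rw [Real.norm_eq_abs, abs_mul]
  exact mul_le_of_le_one_right (abs_nonneg _) (abs_Sfun_le_one _ _)

include hb ha in
lemma summable_pcoeff_wt_S (x : EuclideanSpace ℝ (Fin d)) :
    Summable fun p : PP d => pcoeff b a p * (wt d (pidx p) * Sfun d (pidx p) x) := by
  refine Summable.of_norm (Summable.of_nonneg_of_le (fun p => norm_nonneg _)
    (fun p => ?_) (summable_Q hb ha))
  rw [Real.norm_eq_abs, abs_mul, abs_mul, abs_of_nonneg (wt_nonneg _), ← mul_assoc,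
    abs_pcoeff_mul_wt b a p]
  exact mul_le_of_le_one_right (by positivity) (abs_Sfun_le_one _ _)

include hb ha in
lemma phi_hasSum (x : EuclideanSpace ℝ (Fin d)) :
    HasSum (fun m => ecoef b a m * (wt d m * Sfun d m x))
      ((∑' j, b j * Cfun d j x) * (∑' k, a k * Sfun d k x)) := by
  have hfg := summable_pcoeff_wt_S hb ha x
  have h := hfg.hasSum.tsum_fiberwise pidx
  have hfun : (fun m : Fin d → ℕ => ecoef b a m * (wt d m * Sfun d m x)) =
      fun m : Fin d → ℕ => ∑' p : (pidx ⁻¹' {m} : Set (PP d)),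
        pcoeff b a p * (wt d (pidx (p : PP d)) * Sfun d (pidx (p : PP d)) x) := by
    funext m
    rw [ecoef, ← tsum_mul_right]
    exact tsum_congr fun p => by rw [Set.mem_singleton_iff.1 p.2]
  rw [hfun]
  have htar : (∑' p : PP d, pcoeff b a p * (wt d (pidx p) * Sfun d (pidx p) x)) =
      (∑' j, b j * Cfun d j x) * (∑' k, a k * Sfun d k x) := by
    have hprod2 : Summable fun jk : (Fin d → ℕ) × (Fin d → ℕ) =>
        (b jk.1 * Cfun d jk.1 x) * (a jk.2 * Sfun d jk.2 x) := by
      refine Summable.of_norm (Summable.of_nonneg_of_le (fun jk => norm_nonneg _) (fun jk => ?_)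
        ((summable_abs_b hb).mul_of_nonneg (summable_abs_b ha)
          (fun j => abs_nonneg _) (fun j => abs_nonneg _)))
      rw [Real.norm_eq_abs, abs_mul, abs_mul, abs_mul]
      refine mul_le_mul ?_ ?_ (by positivity) (abs_nonneg _)
      · exact mul_le_of_le_one_right (abs_nonneg _) (abs_Cfun_le_one _ _)
      · exact mul_le_of_le_one_right (abs_nonneg _) (abs_Sfun_le_one _ _)
    calc (∑' p : PP d, pcoeff b a p * (wt d (pidx p) * Sfun d (pidx p) x))
        = ∑' jk : (Fin d → ℕ) × (Fin d → ℕ), ∑' ε : Fin d → Bool,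
            pcoeff b a (jk, ε) * (wt d (pidx (jk, ε)) * Sfun d (pidx (jk, ε)) x) :=
          Summable.tsum_prod' hfg (fun jk => Summable.of_finite)
      _ = ∑' jk : (Fin d → ℕ) × (Fin d → ℕ), (b jk.1 * Cfun d jk.1 x) * (a jk.2 * Sfun d jk.2 x) := by
          refine tsum_congr fun jk => ?_
          rw [tsum_fintype]
          have hterm : ∀ ε : Fin d → Bool,
              pcoeff b a (jk, ε) * (wt d (pidx (jk, ε)) * Sfun d (pidx (jk, ε)) x) =
              b jk.1 * a jk.2 *
                ((2^d : ℝ)⁻¹ * psgn ((jk.1, jk.2), ε) * Sfun d (pidx ((jk.1, jk.2), ε)) x) := by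
            intro ε
            have hw := wt_ne_zero (pidx (jk, ε))
            rw [pcoeff]
            field_simp
          rw [Finset.sum_congr rfl (fun ε _ => hterm ε), ← Finset.mul_sum,
            ← Cfun_mul_Sfun jk.1 jk.2 x]
          ring
      _ = (∑' j, b j * Cfun d j x) * (∑' k, a k * Sfun d k x) :=
          (Summable.tsum_mul_tsum (summable_bC hb x) (summable_aS ha x) hprod2).symm
  rw [htar] at h
  exact h

end Pointwise

end St14

namespace St14

variable {d : ℕ}

/-- Partial product of sines. -/
noncomputable def SD (d : ℕ) (m : Fin d → ℕ) (s : Finset (Fin d))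
    (x : EuclideanSpace ℝ (Fin d)) : ℝ :=
  ∏ i ∈ s, Real.sin (π * m i * x i)

lemma Sfun_eq_SD (m : Fin d → ℕ) (x : EuclideanSpace ℝ (Fin d)) :
    Sfun d m x = SD d m Finset.univ x := rfl

lemma abs_SD_le_one (m : Fin d → ℕ) (s : Finset (Fin d)) (x : EuclideanSpace ℝ (Fin d)) :
    |SD d m s x| ≤ 1 := by
  rw [SD, Finset.abs_prod]
  exact Finset.prod_le_one (fun i _ => abs_nonneg _) (fun i _ => Real.abs_sin_le_one _)

/-- `i`-th component of the gradient of `Sfun`. -/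
noncomputable def gco (d : ℕ) (m : Fin d → ℕ) (i : Fin d) (x : EuclideanSpace ℝ (Fin d)) : ℝ :=
  π * m i * Real.cos (π * m i * x i) * SD d m (Finset.univ.erase i) x

/-- Gradient of `Sfun` as a vector in Euclidean space. -/
noncomputable def gradS (d : ℕ) (m : Fin d → ℕ) (x : EuclideanSpace ℝ (Fin d)) :
    EuclideanSpace ℝ (Fin d) :=
  (WithLp.equiv 2 (Fin d → ℝ)).symm (fun i => gco d m i x)

lemma gradS_apply (m : Fin d → ℕ) (x : EuclideanSpace ℝ (Fin d)) (i : Fin d) :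
    gradS d m x i = gco d m i x := rfl

/-- Fréchet derivative of the partial sine product. -/
noncomputable def LSD (d : ℕ) (m : Fin d → ℕ) (s : Finset (Fin d))
    (x : EuclideanSpace ℝ (Fin d)) : EuclideanSpace ℝ (Fin d) →L[ℝ] ℝ :=
  ∑ i ∈ s, ((π * m i * Real.cos (π * m i * x i)) * SD d m (s.erase i) x) •
    (EuclideanSpace.proj i : EuclideanSpace ℝ (Fin d) →L[ℝ] ℝ)

lemma hasFDerivAt_sin_coord (c : ℝ) (i : Fin d) (x : EuclideanSpace ℝ (Fin d)) :
    HasFDerivAt (fun y : EuclideanSpace ℝ (Fin d) => Real.sin (c * y i))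
      ((c * Real.cos (c * x i)) • (EuclideanSpace.proj i : EuclideanSpace ℝ (Fin d) →L[ℝ] ℝ)) x := by
  have h1 : HasFDerivAt (fun y : EuclideanSpace ℝ (Fin d) => c * y i)
      (c • (EuclideanSpace.proj i : EuclideanSpace ℝ (Fin d) →L[ℝ] ℝ)) x :=
    ((EuclideanSpace.proj (𝕜 := ℝ) i).hasFDerivAt (x := x)).const_mul c
  have h2 := (Real.hasDerivAt_sin (c * x i)).comp_hasFDerivAt x h1
  have : Real.cos (c * x i) • (c • (EuclideanSpace.proj i : EuclideanSpace ℝ (Fin d) →L[ℝ] ℝ)) =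
      (c * Real.cos (c * x i)) • (EuclideanSpace.proj i : EuclideanSpace ℝ (Fin d) →L[ℝ] ℝ) := by
    rw [smul_smul, mul_comm]
  rwa [this] at h2

lemma hasFDerivAt_cos_coord (c : ℝ) (i : Fin d) (x : EuclideanSpace ℝ (Fin d)) :
    HasFDerivAt (fun y : EuclideanSpace ℝ (Fin d) => Real.cos (c * y i))
      ((-(c * Real.sin (c * x i))) • (EuclideanSpace.proj i : EuclideanSpace ℝ (Fin d) →L[ℝ] ℝ)) x := by
  have h1 : HasFDerivAt (fun y : EuclideanSpace ℝ (Fin d) => c * y i)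
      (c • (EuclideanSpace.proj i : EuclideanSpace ℝ (Fin d) →L[ℝ] ℝ)) x :=
    ((EuclideanSpace.proj (𝕜 := ℝ) i).hasFDerivAt (x := x)).const_mul c
  have h2 := (Real.hasDerivAt_cos (c * x i)).comp_hasFDerivAt x h1
  have : (-Real.sin (c * x i)) • (c • (EuclideanSpace.proj i : EuclideanSpace ℝ (Fin d) →L[ℝ] ℝ)) =
      (-(c * Real.sin (c * x i))) • (EuclideanSpace.proj i : EuclideanSpace ℝ (Fin d) →L[ℝ] ℝ) := by
    rw [smul_smul]; ring_nf
  rwa [this] at h2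

lemma hasFDerivAt_SD (m : Fin d → ℕ) (s : Finset (Fin d)) (x : EuclideanSpace ℝ (Fin d)) :
    HasFDerivAt (SD d m s) (LSD d m s x) x := by
  classical
  have h := HasFDerivAt.finset_prod (u := s)
    (g := fun i (y : EuclideanSpace ℝ (Fin d)) => Real.sin (π * m i * y i))
    (g' := fun i => (π * m i * Real.cos (π * m i * x i)) •
      (EuclideanSpace.proj i : EuclideanSpace ℝ (Fin d) →L[ℝ] ℝ))
    (fun i _ => hasFDerivAt_sin_coord (π * m i) i x)
  have heq : (∑ i ∈ s, (∏ j ∈ s.erase i, Real.sin (π * m j * x j)) •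
      ((π * m i * Real.cos (π * m i * x i)) •
        (EuclideanSpace.proj i : EuclideanSpace ℝ (Fin d) →L[ℝ] ℝ))) = LSD d m s x := by
    rw [LSD]
    refine Finset.sum_congr rfl fun i _ => ?_
    rw [smul_smul, SD, mul_comm]
  rwa [heq] at h

lemma LSD_eq_toDual (m : Fin d → ℕ) (x : EuclideanSpace ℝ (Fin d)) :
    LSD d m Finset.univ x = (InnerProductSpace.toDual ℝ (EuclideanSpace ℝ (Fin d))) (gradS d m x) := by
  refine ContinuousLinearMap.ext fun y => ?_
  rw [InnerProductSpace.toDual_apply_apply, LSD, PiLp.inner_apply]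
  rw [ContinuousLinearMap.sum_apply]
  refine Finset.sum_congr rfl fun i _ => ?_
  rw [ContinuousLinearMap.smul_apply]
  simp only [RCLike.inner_apply, conj_trivial, PiLp.proj_apply, smul_eq_mul]
  rw [gradS_apply, gco]
  ring

lemma hasGradientAt_Sfun (m : Fin d → ℕ) (x : EuclideanSpace ℝ (Fin d)) :
    HasGradientAt (Sfun d m) (gradS d m x) x := by
  rw [hasGradientAt_iff_hasFDerivAt, ← LSD_eq_toDual]
  exact hasFDerivAt_SD m Finset.univ x

lemma abs_gco_le (m : Fin d → ℕ) (i : Fin d) (x : EuclideanSpace ℝ (Fin d)) :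
    |gco d m i x| ≤ π * m i := by
  rw [gco, abs_mul]
  have h1 : |π * ↑(m i) * Real.cos (π * m i * x i)| ≤ π * m i := by
    rw [abs_mul]
    calc |π * ↑(m i)| * |Real.cos (π * m i * x i)| ≤ |π * ↑(m i)| * 1 :=
          mul_le_mul_of_nonneg_left (Real.abs_cos_le_one _) (abs_nonneg _)
      _ = π * m i := by rw [mul_one, abs_of_nonneg (by positivity)]
  calc |π * ↑(m i) * Real.cos (π * ↑(m i) * x i)| * |SD d m (Finset.univ.erase i) x|
      ≤ |π * ↑(m i) * Real.cos (π * ↑(m i) * x i)| * 1 :=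
        mul_le_mul_of_nonneg_left (abs_SD_le_one _ _ _) (abs_nonneg _)
    _ ≤ π * m i := by rw [mul_one]; exact h1

lemma norm_gradS_le (m : Fin d → ℕ) (x : EuclideanSpace ℝ (Fin d)) :
    ‖gradS d m x‖ ≤ π * knorm d m := by
  rw [EuclideanSpace.norm_eq]
  have h1 : ∀ i, ‖gradS d m x i‖ ^ 2 ≤ π^2 * (m i : ℝ)^2 := by
    intro i
    rw [Real.norm_eq_abs]
    have := abs_gco_le m i x
    have h0 : (0:ℝ) ≤ |gco d m i x| := abs_nonneg _
    rw [gradS_apply]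
    nlinarith
  calc Real.sqrt (∑ i, ‖gradS d m x i‖ ^ 2) ≤ Real.sqrt (∑ i, π^2 * (m i : ℝ)^2) :=
        Real.sqrt_le_sqrt (Finset.sum_le_sum fun i _ => h1 i)
    _ = π * knorm d m := by
        rw [← Finset.mul_sum, Real.sqrt_mul (by positivity), knorm,
          Real.sqrt_sq Real.pi_pos.le]

lemma norm_gradS_le_wt (m : Fin d → ℕ) (x : EuclideanSpace ℝ (Fin d)) :
    ‖gradS d m x‖ ≤ wt d m := by
  refine (norm_gradS_le m x).trans ?_
  have hk : 0 ≤ knorm d m := Real.sqrt_nonneg _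
  have := Real.pi_pos
  rw [wt]
  nlinarith [sq_nonneg (π * knorm d m - 1)]

lemma continuous_coord (i : Fin d) : Continuous fun x : EuclideanSpace ℝ (Fin d) => x i :=
  (EuclideanSpace.proj (𝕜 := ℝ) i).continuous

lemma continuous_SD (m : Fin d → ℕ) (s : Finset (Fin d)) : Continuous (SD d m s) := by
  refine continuous_finset_prod s fun i _ => ?_
  exact Real.continuous_sin.comp (continuous_const.mul (continuous_coord i))

lemma continuous_Sfun (m : Fin d → ℕ) : Continuous (Sfun d m) := by
  have := continuous_SD m Finset.univ
  simpa [funext (Sfun_eq_SD m)] using this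

lemma continuous_gco (m : Fin d → ℕ) (i : Fin d) : Continuous (gco d m i) := by
  refine Continuous.mul ?_ (continuous_SD m _)
  exact (continuous_const.mul (Real.continuous_cos.comp (continuous_const.mul (continuous_coord i))))

lemma continuous_gradS (m : Fin d → ℕ) : Continuous (gradS d m) := by
  have h : Continuous fun x : EuclideanSpace ℝ (Fin d) => (fun i => gco d m i x) :=
    continuous_pi fun i => continuous_gco m i
  exact (PiLp.continuousLinearEquiv 2 ℝ (fun _ : Fin d => ℝ)).symm.continuous.comp h

end St14

namespace St14

variable {d : ℕ}

/-- The canonical homeomorphism between Euclidean space and the product space. -/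
noncomputable def homeoP (d : ℕ) : EuclideanSpace ℝ (Fin d) ≃ₜ (Fin d → ℝ) :=
  (PiLp.continuousLinearEquiv 2 ℝ (fun _ : Fin d => ℝ)).toHomeomorph

lemma homeoP_apply (x : EuclideanSpace ℝ (Fin d)) (i : Fin d) : homeoP d x i = x i := rfl

lemma unitCube_eq_preimage :
    unitCube d = homeoP d ⁻¹' (Set.univ.pi fun _ : Fin d => Set.Ioo (0:ℝ) 1) := rfl

lemma isOpen_unitCube : IsOpen (unitCube d) := by
  rw [unitCube_eq_preimage]
  exact (isOpen_set_pi Set.finite_univ fun i _ => isOpen_Ioo).preimage (homeoP d).continuous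

lemma frontier_unitCube_spec {x : EuclideanSpace ℝ (Fin d)}
    (hx : x ∈ frontier (unitCube d)) :
    (∀ i, x i ∈ Set.Icc (0:ℝ) 1) ∧ ∃ i, x i = 0 ∨ x i = 1 := by
  rw [unitCube_eq_preimage, ← Homeomorph.preimage_frontier] at hx
  have hx' : homeoP d x ∈ frontier (Set.univ.pi fun _ : Fin d => Set.Ioo (0:ℝ) 1) := hx
  rw [frontier_eq_closure_inter_closure] at hx'
  obtain ⟨hcl, hncl⟩ := hx'
  rw [closure_pi_set] at hcl
  have hIcc : ∀ i, x i ∈ Set.Icc (0:ℝ) 1 := by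
    intro i
    have := hcl i (Set.mem_univ i)
    rwa [closure_Ioo (by norm_num : (0:ℝ) ≠ 1)] at this
  refine ⟨hIcc, ?_⟩
  have hno : homeoP d x ∉ (Set.univ.pi fun _ : Fin d => Set.Ioo (0:ℝ) 1) := by
    intro hmem
    have hop : IsOpen (Set.univ.pi fun _ : Fin d => Set.Ioo (0:ℝ) 1) :=
      isOpen_set_pi Set.finite_univ fun i _ => isOpen_Ioo
    have : homeoP d x ∈ closure ((Set.univ.pi fun _ : Fin d => Set.Ioo (0:ℝ) 1)ᶜ) := hncl
    rw [closure_compl] at this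
    exact this (by rwa [hop.interior_eq])
  rw [Set.mem_pi] at hno
  push_neg at hno
  obtain ⟨i, -, hi⟩ := hno
  refine ⟨i, ?_⟩
  have h1 := (hIcc i).1
  have h2 := (hIcc i).2
  rw [Set.mem_Ioo] at hi
  push_neg at hi
  rcases eq_or_lt_of_le h1 with h | h
  · exact Or.inl h.symm
  · exact Or.inr (le_antisymm h2 (hi h))

lemma mem_frontier_unitCube {x : EuclideanSpace ℝ (Fin d)}
    (h1 : ∀ i, x i ∈ Set.Icc (0:ℝ) 1) {i0 : Fin d} (h2 : x i0 = 0 ∨ x i0 = 1) :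
    x ∈ frontier (unitCube d) := by
  rw [unitCube_eq_preimage, ← Homeomorph.preimage_frontier]
  show homeoP d x ∈ frontier (Set.univ.pi fun _ : Fin d => Set.Ioo (0:ℝ) 1)
  rw [frontier_eq_closure_inter_closure]
  constructor
  · rw [closure_pi_set]
    intro i _
    rw [closure_Ioo (by norm_num : (0:ℝ) ≠ 1)]
    exact h1 i
  · have hop : IsOpen (Set.univ.pi fun _ : Fin d => Set.Ioo (0:ℝ) 1) :=
      isOpen_set_pi Set.finite_univ fun i _ => isOpen_Ioo
    rw [closure_compl, hop.interior_eq]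
    intro hmem
    have := hmem i0 (Set.mem_univ i0)
    rcases h2 with h | h
    · rw [homeoP_apply, h] at this
      exact lt_irrefl _ this.1
    · rw [homeoP_apply, h] at this
      exact lt_irrefl _ this.2

lemma Sfun_eq_zero_of_frontier {x : EuclideanSpace ℝ (Fin d)}
    (hx : x ∈ frontier (unitCube d)) (m : Fin d → ℕ) : Sfun d m x = 0 := by
  obtain ⟨-, i, hi⟩ := frontier_unitCube_spec hx
  rw [Sfun]
  refine Finset.prod_eq_zero (Finset.mem_univ i) ?_
  rcases hi with h | h
  · rw [h, mul_zero, Real.sin_zero]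
  · rw [h, mul_one, mul_comm, Real.sin_nat_mul_pi]

lemma measure_unitCube_lt_top : volume (unitCube d) < ⊤ := by
  have hb : Bornology.IsBounded (unitCube d) := by
    rw [isBounded_iff_forall_norm_le]
    refine ⟨Real.sqrt d, fun x hx => ?_⟩
    rw [EuclideanSpace.norm_eq]
    have h1 : ∀ i, ‖x i‖^2 ≤ 1 := by
      intro i
      have := hx i (Set.mem_univ i)
      rw [Real.norm_eq_abs, abs_of_nonneg this.1.le]
      nlinarith [this.1, this.2]
    calc Real.sqrt (∑ i, ‖x i‖^2) ≤ Real.sqrt (∑ _i : Fin d, (1:ℝ)) :=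
          Real.sqrt_le_sqrt (Finset.sum_le_sum fun i _ => h1 i)
      _ = Real.sqrt d := by rw [Finset.sum_const, Finset.card_univ, Fintype.card_fin,
            nsmul_eq_mul, mul_one]
  exact hb.measure_lt_top

lemma isFiniteMeasure_restrict : IsFiniteMeasure (volume.restrict (unitCube d)) := by
  refine ⟨?_⟩
  rw [Measure.restrict_apply_univ]
  exact measure_unitCube_lt_top

lemma memLp_two_of_bound {F : Type*} [NormedAddCommGroup F]
    (f : EuclideanSpace ℝ (Fin d) → F) (hf : Continuous f) (C : ℝ)
    (hC : ∀ x, ‖f x‖ ≤ C) : MemLp f 2 (volume.restrict (unitCube d)) := by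
  haveI := isFiniteMeasure_restrict (d := d)
  exact (memLp_top_of_bound hf.aestronglyMeasurable C (ae_of_all _ hC)).mono_exponent
    le_top

section W

variable (e : (Fin d → ℕ) → ℝ)
variable (he : Summable fun m => |e m| * wt d m)

/-- The candidate weak solution. -/
noncomputable def Wfun (e : (Fin d → ℕ) → ℝ) (x : EuclideanSpace ℝ (Fin d)) : ℝ :=
  ∑' m, e m * Sfun d m x

/-- Gradient of the candidate weak solution. -/
noncomputable def GW (e : (Fin d → ℕ) → ℝ) (x : EuclideanSpace ℝ (Fin d)) :
    EuclideanSpace ℝ (Fin d) :=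
  ∑' m, e m • gradS d m x

include he in
lemma summable_abs_e : Summable fun m => |e m| :=
  Summable.of_nonneg_of_le (fun m => abs_nonneg _)
    (fun m => le_mul_of_one_le_right (abs_nonneg _) (one_le_wt _)) he

include he in
lemma summable_eS (x : EuclideanSpace ℝ (Fin d)) : Summable fun m => e m * Sfun d m x := by
  refine Summable.of_norm (Summable.of_nonneg_of_le (fun m => norm_nonneg _) (fun m => ?_)
    (summable_abs_e e he))
  rw [Real.norm_eq_abs, abs_mul]
  exact mul_le_of_le_one_right (abs_nonneg _) (abs_Sfun_le_one _ _)

lemma norm_e_smul_LSD_le (m : Fin d → ℕ) (x : EuclideanSpace ℝ (Fin d)) :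
    ‖e m • LSD d m Finset.univ x‖ ≤ |e m| * wt d m := by
  have h1 : ‖e m • LSD d m Finset.univ x‖ = |e m| * ‖LSD d m Finset.univ x‖ := by
    rw [norm_smul (e m) (LSD d m Finset.univ x), Real.norm_eq_abs]
  rw [h1, LSD_eq_toDual, LinearIsometryEquiv.norm_map]
  exact mul_le_mul_of_nonneg_left (norm_gradS_le_wt m x) (abs_nonneg _)

include he in
lemma summable_e_gradS (x : EuclideanSpace ℝ (Fin d)) :
    Summable fun m => e m • gradS d m x := by
  refine Summable.of_norm (Summable.of_nonneg_of_le (fun m => norm_nonneg _) (fun m => ?_) he)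
  rw [norm_smul, Real.norm_eq_abs]
  exact mul_le_mul_of_nonneg_left (norm_gradS_le_wt m x) (abs_nonneg _)

include he in
lemma Wfun_hasFDerivAt (x : EuclideanSpace ℝ (Fin d)) :
    HasFDerivAt (Wfun e) ((InnerProductSpace.toDual ℝ (EuclideanSpace ℝ (Fin d))) (GW e x)) x := by
  have h := hasFDerivAt_tsum (𝕜 := ℝ) (u := fun m => |e m| * wt d m) he
    (f := fun m y => e m * Sfun d m y)
    (f' := fun m y => e m • LSD d m Finset.univ y)
    (fun m y => by
      have := (hasFDerivAt_SD m Finset.univ y).const_mul (e m)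
      exact this)
    (fun m y => norm_e_smul_LSD_le e m y)
    (summable_eS e he 0) x
  have heq : (∑' m, e m • LSD d m Finset.univ x) =
      (InnerProductSpace.toDual ℝ (EuclideanSpace ℝ (Fin d))) (GW e x) := by
    have h1 : (fun m => e m • LSD d m Finset.univ x) =
        fun m => (InnerProductSpace.toDual ℝ
          (EuclideanSpace ℝ (Fin d))).toContinuousLinearEquiv (e m • gradS d m x) := by
      funext m
      rw [LSD_eq_toDual]
      have h2 : ((InnerProductSpace.toDual ℝ
          (EuclideanSpace ℝ (Fin d))).toContinuousLinearEquiv (e m • gradS d m x)) =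
          (InnerProductSpace.toDual ℝ (EuclideanSpace ℝ (Fin d))) (e m • gradS d m x) := rfl
      rw [h2, LinearIsometryEquiv.map_smul]
    rw [h1, ← ContinuousLinearEquiv.map_tsum]
    rfl
  rw [heq] at h
  exact h

include he in
lemma Wfun_hasGradientAt (x : EuclideanSpace ℝ (Fin d)) :
    HasGradientAt (Wfun e) (GW e x) x := by
  rw [hasGradientAt_iff_hasFDerivAt]
  exact Wfun_hasFDerivAt e he x

include he in
lemma gradient_Wfun (x : EuclideanSpace ℝ (Fin d)) : gradient (Wfun e) x = GW e x :=
  (Wfun_hasGradientAt e he x).gradient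

include he in
lemma continuous_GW : Continuous (GW e) := by
  refine continuous_tsum (fun m => (continuous_gradS m).const_smul (e m)) he (fun m x => ?_)
  rw [norm_smul, Real.norm_eq_abs]
  exact mul_le_mul_of_nonneg_left (norm_gradS_le_wt m x) (abs_nonneg _)

include he in
lemma contDiff_Wfun : ContDiff ℝ 1 (Wfun e) := by
  rw [contDiff_one_iff_fderiv]
  constructor
  · exact fun x => (Wfun_hasFDerivAt e he x).differentiableAt
  · have hfd : fderiv ℝ (Wfun e) = fun x =>
        (InnerProductSpace.toDual ℝ (EuclideanSpace ℝ (Fin d))) (GW e x) :=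
      funext fun x => (Wfun_hasFDerivAt e he x).fderiv
    rw [hfd]
    exact (InnerProductSpace.toDual ℝ (EuclideanSpace ℝ (Fin d))).continuous.comp
      (continuous_GW e he)

include he in
lemma continuous_Wfun : Continuous (Wfun e) := (contDiff_Wfun e he).continuous

include he in
lemma abs_Wfun_le (x : EuclideanSpace ℝ (Fin d)) : |Wfun e x| ≤ ∑' m, |e m| := by
  have hs : Summable fun m => |e m| * |Sfun d m x| := by
    refine Summable.of_nonneg_of_le (fun m => mul_nonneg (abs_nonneg _) (abs_nonneg _))
      (fun m => ?_) (summable_abs_e e he)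
    exact mul_le_of_le_one_right (abs_nonneg _) (abs_Sfun_le_one _ _)
  have h1 : |Wfun e x| ≤ ∑' m, |e m| * |Sfun d m x| := by
    have := norm_tsum_le_tsum_norm (f := fun m => e m * Sfun d m x)
      (by simpa [Real.norm_eq_abs, abs_mul] using hs)
    simpa [Real.norm_eq_abs, Wfun, abs_mul] using this
  refine h1.trans (Summable.tsum_le_tsum (fun m => ?_) hs (summable_abs_e e he))
  exact mul_le_of_le_one_right (abs_nonneg _) (abs_Sfun_le_one _ _)

include he in
lemma norm_GW_le (x : EuclideanSpace ℝ (Fin d)) : ‖GW e x‖ ≤ ∑' m, |e m| * wt d m := by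
  have h1 : ‖GW e x‖ ≤ ∑' m, ‖e m • gradS d m x‖ :=
    norm_tsum_le_tsum_norm ((summable_e_gradS e he x).norm)
  refine h1.trans (Summable.tsum_le_tsum (fun m => ?_) ((summable_e_gradS e he x).norm) he)
  rw [norm_smul, Real.norm_eq_abs]
  exact mul_le_mul_of_nonneg_left (norm_gradS_le_wt m x) (abs_nonneg _)

include he in
lemma Wfun_zero_of_frontier {x : EuclideanSpace ℝ (Fin d)}
    (hx : x ∈ frontier (unitCube d)) : Wfun e x = 0 := by
  rw [Wfun]
  have : ∀ m : Fin d → ℕ, e m * Sfun d m x = 0 := fun m => by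
    rw [Sfun_eq_zero_of_frontier hx m, mul_zero]
  simp [this]

include he in
lemma memH01_Wfun : MemH01 d (Wfun e) := by
  refine ⟨contDiff_Wfun e he, fun x hx => Wfun_zero_of_frontier e he hx, ?_, ?_⟩
  · exact memLp_two_of_bound _ (continuous_Wfun e he) _
      (fun x => by rw [Real.norm_eq_abs]; exact abs_Wfun_le e he x)
  · have hgrad : (fun x => gradient (Wfun e) x) = GW e := funext fun x => gradient_Wfun e he x
    rw [hgrad]
    exact memLp_two_of_bound _ (continuous_GW e he) _ (fun x => norm_GW_le e he x)

end W

end St14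

namespace St14

variable {d : ℕ}

/-- Full Fréchet derivative of the gradient component `gco`. -/
noncomputable def LgI (d : ℕ) (m : Fin d → ℕ) (i : Fin d) (x : EuclideanSpace ℝ (Fin d)) :
    EuclideanSpace ℝ (Fin d) →L[ℝ] ℝ :=
  (π * m i * Real.cos (π * m i * x i)) • LSD d m (Finset.univ.erase i) x +
    SD d m (Finset.univ.erase i) x •
      ((π * (m i : ℝ)) • ((-(π * m i * Real.sin (π * m i * x i))) •
        (EuclideanSpace.proj i : EuclideanSpace ℝ (Fin d) →L[ℝ] ℝ)))

lemma hasFDerivAt_gco (m : Fin d → ℕ) (i : Fin d) (x : EuclideanSpace ℝ (Fin d)) :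
    HasFDerivAt (gco d m i) (LgI d m i x) x := by
  have hc := (hasFDerivAt_cos_coord (π * m i) i x).const_mul (π * (m i : ℝ))
  have h := hc.mul (hasFDerivAt_SD m (Finset.univ.erase i) x)
  exact h

lemma sin_mul_SD_erase (m : Fin d → ℕ) (i : Fin d) (x : EuclideanSpace ℝ (Fin d)) :
    Real.sin (π * m i * x i) * SD d m (Finset.univ.erase i) x = Sfun d m x :=
  Finset.mul_prod_erase Finset.univ (fun j => Real.sin (π * m j * x j)) (Finset.mem_univ i)

lemma LSD_erase_single (m : Fin d → ℕ) (i : Fin d) (x : EuclideanSpace ℝ (Fin d)) :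
    LSD d m (Finset.univ.erase i) x (EuclideanSpace.single i (1:ℝ)) = 0 := by
  rw [LSD, ContinuousLinearMap.sum_apply]
  refine Finset.sum_eq_zero fun j hj => ?_
  have hij : j ≠ i := Finset.ne_of_mem_erase hj
  rw [ContinuousLinearMap.smul_apply]
  have : (EuclideanSpace.proj (𝕜 := ℝ) j) (EuclideanSpace.single i (1:ℝ)) = 0 := by
    rw [PiLp.proj_apply, EuclideanSpace.single_apply, if_neg hij]
  rw [this, smul_eq_mul, mul_zero]

lemma LgI_single (m : Fin d → ℕ) (i : Fin d) (x : EuclideanSpace ℝ (Fin d)) :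
    LgI d m i x (EuclideanSpace.single i (1:ℝ)) = -(π^2 * (m i:ℝ)^2 * Sfun d m x) := by
  rw [LgI, ContinuousLinearMap.add_apply, ContinuousLinearMap.smul_apply,
    ContinuousLinearMap.smul_apply, ContinuousLinearMap.smul_apply,
    ContinuousLinearMap.smul_apply, LSD_erase_single]
  have hproj : (EuclideanSpace.proj (𝕜 := ℝ) i) (EuclideanSpace.single i (1:ℝ)) = 1 := by
    rw [PiLp.proj_apply, EuclideanSpace.single_apply, if_pos rfl]
  rw [hproj]
  simp only [smul_eq_mul]
  rw [← sin_mul_SD_erase m i x]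
  ring

/-- The derivative relation `(Gv x) i = fderiv v x (single i 1)`. -/
lemma gradient_component (v : EuclideanSpace ℝ (Fin d) → ℝ) (hv : ContDiff ℝ 1 v)
    (x : EuclideanSpace ℝ (Fin d)) (i : Fin d) :
    gradient v x i = fderiv ℝ v x (EuclideanSpace.single i (1:ℝ)) := by
  have hg : HasGradientAt v (gradient v x) x :=
    (hv.differentiable one_ne_zero x).hasGradientAt
  have hf := hg.hasFDerivAt.fderiv
  rw [hf, InnerProductSpace.toDual_apply_apply, EuclideanSpace.inner_single_right]
  simp

lemma continuous_gradient (v : EuclideanSpace ℝ (Fin d) → ℝ) (hv : ContDiff ℝ 1 v) :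
    Continuous (fun x => gradient v x) := by
  have h1 : Continuous (fderiv ℝ v) := (contDiff_one_iff_fderiv.1 hv).2
  exact (InnerProductSpace.toDual ℝ
    (EuclideanSpace ℝ (Fin d))).symm.continuous.comp h1

lemma inner_gradS_eq_sum (m : Fin d → ℕ) (x g : EuclideanSpace ℝ (Fin d)) :
    (inner ℝ (gradS d m x) g : ℝ) = ∑ i, gco d m i x * g i := by
  rw [PiLp.inner_apply]
  exact Finset.sum_congr rfl fun i _ => by
    simp only [RCLike.inner_apply, conj_trivial]
    rw [gradS_apply]
    ring

section Transfer

/-- Transfer of set integrals from the cube in Euclidean space to the pi space. -/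
lemma setIntegral_cube (d : ℕ) (g : EuclideanSpace ℝ (Fin d) → ℝ) :
    ∫ x in unitCube d, g x =
      ∫ y in (Set.univ.pi fun _ : Fin d => Set.Ioo (0:ℝ) 1),
        g ((MeasurableEquiv.toLp 2 (Fin d → ℝ)) y) := by
  have h := (EuclideanSpace.volume_preserving_symm_measurableEquiv_toLp (Fin d)).symm
  have hemb : MeasurableEmbedding ((MeasurableEquiv.toLp 2 (Fin d → ℝ))) :=
    (MeasurableEquiv.toLp 2 (Fin d → ℝ)).measurableEmbedding
  have hpre : ((MeasurableEquiv.toLp 2 (Fin d → ℝ))) ⁻¹' (unitCube d) =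
      (Set.univ.pi fun _ : Fin d => Set.Ioo (0:ℝ) 1) := rfl
  rw [← h.setIntegral_preimage_emb hemb g (unitCube d), MeasurableEquiv.symm_symm, hpre]

end Transfer

lemma ibp_div_succ (n : ℕ) (m : Fin (n+1) → ℕ) (v : EuclideanSpace ℝ (Fin (n+1)) → ℝ)
    (hv1 : ContDiff ℝ 1 v) (hvbd : ∀ x ∈ frontier (unitCube (n+1)), v x = 0) :
    ∫ x in unitCube (n+1), ((inner ℝ (gradS (n+1) m x) (gradient v x) : ℝ) -
      π^2 * (∑ i, (m i:ℝ)^2) * (Sfun (n+1) m x * v x)) = 0 := by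
  have hvc : Continuous v := hv1.continuous
  have hGvc : Continuous (fun x => gradient v x) := continuous_gradient v hv1
  set toE := (MeasurableEquiv.toLp 2 (Fin (n+1) → ℝ)) with htoE
  set FF : Fin (n+1) → (Fin (n+1) → ℝ) → ℝ := fun i y => v (toE y) * gco (n+1) m i (toE y)
    with hFF
  set FF' : Fin (n+1) → (Fin (n+1) → ℝ) → ((Fin (n+1) → ℝ) →L[ℝ] ℝ) := fun i y =>
    (v (toE y) • LgI (n+1) m i (toE y) + gco (n+1) m i (toE y) • fderiv ℝ v (toE y)).comp
      ((PiLp.continuousLinearEquiv 2 ℝ (fun _ : Fin (n+1) => ℝ)).symm :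
        (Fin (n+1) → ℝ) →L[ℝ] EuclideanSpace ℝ (Fin (n+1))) with hFF'
  -- value of the divergence
  have hdiv : ∀ y : Fin (n+1) → ℝ, (∑ i, FF' i y (Pi.single i 1)) =
      (inner ℝ (gradS (n+1) m (toE y)) (gradient v (toE y)) : ℝ) -
        π^2 * (∑ i, (m i:ℝ)^2) * (Sfun (n+1) m (toE y) * v (toE y)) := by
    intro y
    have hterm : ∀ i : Fin (n+1), FF' i y (Pi.single i 1) =
        gco (n+1) m i (toE y) * gradient v (toE y) i -
          π^2 * (m i:ℝ)^2 * Sfun (n+1) m (toE y) * v (toE y) := by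
      intro i
      rw [hFF']
      simp only [ContinuousLinearMap.coe_comp', Function.comp_apply,
        ContinuousLinearMap.add_apply, ContinuousLinearMap.smul_apply, smul_eq_mul]
      have h0 : ((PiLp.continuousLinearEquiv 2 ℝ (fun _ : Fin (n+1) => ℝ)).symm :
          (Fin (n+1) → ℝ) →L[ℝ] EuclideanSpace ℝ (Fin (n+1))) (Pi.single i (1:ℝ)) =
          EuclideanSpace.single i (1:ℝ) := rfl
      rw [h0, LgI_single, ← gradient_component v hv1]
      ring
    rw [Finset.sum_congr rfl fun i _ => hterm i, Finset.sum_sub_distrib,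
      inner_gradS_eq_sum, ← Finset.sum_mul, ← Finset.sum_mul, ← Finset.mul_sum, mul_assoc]
  -- differentiability
  have hd : ∀ y : Fin (n+1) → ℝ, ∀ i, HasFDerivAt (FF i) (FF' i y) y := by
    intro y i
    have hbig : HasFDerivAt (fun x : EuclideanSpace ℝ (Fin (n+1)) => v x * gco (n+1) m i x)
        (v (toE y) • LgI (n+1) m i (toE y) + gco (n+1) m i (toE y) • fderiv ℝ v (toE y))
        (toE y) :=
      ((hv1.differentiable one_ne_zero (toE y)).hasFDerivAt).mul (hasFDerivAt_gco m i (toE y))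
    have hiso : HasFDerivAt
        (fun y : Fin (n+1) → ℝ =>
          ((PiLp.continuousLinearEquiv 2 ℝ (fun _ : Fin (n+1) => ℝ)).symm y))
        ((PiLp.continuousLinearEquiv 2 ℝ (fun _ : Fin (n+1) => ℝ)).symm :
          (Fin (n+1) → ℝ) →L[ℝ] EuclideanSpace ℝ (Fin (n+1))) y :=
      (PiLp.continuousLinearEquiv 2 ℝ (fun _ : Fin (n+1) => ℝ)).symm.hasFDerivAt
    exact hbig.comp y hiso
  have hctE : Continuous (⇑toE : (Fin (n+1) → ℝ) → EuclideanSpace ℝ (Fin (n+1))) :=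
    (PiLp.continuousLinearEquiv 2 ℝ (fun _ : Fin (n+1) => ℝ)).symm.continuous
  have hFc : ∀ i, Continuous (FF i) := fun i =>
    ((hvc.comp hctE).mul ((continuous_gco m i).comp hctE))
  have hIc : Continuous fun y : Fin (n+1) → ℝ => ∑ i, FF' i y (Pi.single i 1) := by
    have hmain : Continuous fun y : Fin (n+1) → ℝ =>
        (inner ℝ (gradS (n+1) m (toE y)) (gradient v (toE y)) : ℝ) -
          π^2 * (∑ i, (m i:ℝ)^2) * (Sfun (n+1) m (toE y) * v (toE y)) := by
      refine Continuous.sub ?_ ?_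
      · exact Continuous.inner ((continuous_gradS m).comp hctE) (hGvc.comp hctE)
      · exact continuous_const.mul
          (((continuous_Sfun m).comp hctE).mul (hvc.comp hctE))
    have heq : (fun y : Fin (n+1) → ℝ => ∑ i, FF' i y (Pi.single i 1)) =
        fun y => (inner ℝ (gradS (n+1) m (toE y)) (gradient v (toE y)) : ℝ) -
          π^2 * (∑ i, (m i:ℝ)^2) * (Sfun (n+1) m (toE y) * v (toE y)) := funext hdiv
    rw [heq]; exact hmain
  have hdt := integral_divergence_of_hasFDerivAt_off_countable
    (a := fun _ : Fin (n+1) => (0:ℝ)) (b := fun _ : Fin (n+1) => (1:ℝ))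
    (fun i => by norm_num) (fun y i => FF i y)
    (fun y => ContinuousLinearMap.pi fun i => FF' i y) ∅ Set.countable_empty
    (continuousOn_pi.2 fun i => (hFc i).continuousOn)
    (fun y _ => hasFDerivAt_pi.2 (hd y))
    ?hInt
  case hInt =>
    have hre : (fun y : Fin (n+1) → ℝ =>
        ∑ i, (ContinuousLinearMap.pi fun i => FF' i y) (Pi.single i 1) i) =
        fun y => ∑ i, FF' i y (Pi.single i 1) :=
      funext fun y => Finset.sum_congr rfl fun i _ => by rw [ContinuousLinearMap.pi_apply]
    rw [show (fun (x : Fin (n+1) → ℝ) => ∑ i,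
        (ContinuousLinearMap.pi fun i => FF' i x) (Pi.single i 1) i) =
        fun y => ∑ i, FF' i y (Pi.single i 1) from hre]
    exact hIc.continuousOn.integrableOn_compact isCompact_Icc
  -- the face integrals vanish
  have hface : ∀ (i : Fin (n+1)) (c : ℝ), c = 0 ∨ c = 1 →
      (∫ z in Set.Icc ((fun _ : Fin (n+1) => (0:ℝ)) ∘ i.succAbove)
          ((fun _ : Fin (n+1) => (1:ℝ)) ∘ i.succAbove),
        FF i (i.insertNth c z)) = 0 := by
    intro i c hc
    rw [setIntegral_congr_fun measurableSet_Icc (g := fun _ => (0:ℝ)) ?_, integral_zero]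
    intro z hz
    obtain ⟨hz1, hz2⟩ := hz
    have hq : ∀ j : Fin (n+1), (Fin.insertNth (α := fun _ => ℝ) i c z) j ∈ Set.Icc (0:ℝ) 1 := by
      intro j
      by_cases hji : j = i
      · subst hji
        rw [Fin.insertNth_apply_same]
        rcases hc with h | h <;> rw [h] <;> constructor <;> norm_num
      · obtain ⟨kk, rfl⟩ := Fin.exists_succAbove_eq hji
        rw [Fin.insertNth_apply_succAbove]
        exact ⟨hz1 kk, hz2 kk⟩
    have hmemf : toE (i.insertNth c z) ∈ frontier (unitCube (n+1)) := by
      refine mem_frontier_unitCube (fun j => hq j) (i0 := i) ?_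
      show ((Fin.insertNth (α := fun _ => ℝ) i c z) i = 0 ∨ (Fin.insertNth (α := fun _ => ℝ) i c z) i = 1)
      rw [Fin.insertNth_apply_same]
      exact hc
    show FF i (i.insertNth c z) = 0
    rw [hFF]
    simp only []
    rw [hvbd _ hmemf, zero_mul]
  -- conclude : the pi-space integral vanishes
  have hzero : (∫ y in Set.Icc (fun _ : Fin (n+1) => (0:ℝ)) (fun _ : Fin (n+1) => (1:ℝ)),
      ∑ i, FF' i y (Pi.single i 1)) = 0 := by
    have hre : (fun y : Fin (n+1) → ℝ =>
        ∑ i, (ContinuousLinearMap.pi fun i => FF' i y) (Pi.single i 1) i) =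
        fun y => ∑ i, FF' i y (Pi.single i 1) :=
      funext fun y => Finset.sum_congr rfl fun i _ => by rw [ContinuousLinearMap.pi_apply]
    rw [show (fun (x : Fin (n+1) → ℝ) => ∑ i,
        (ContinuousLinearMap.pi fun i => FF' i x) (Pi.single i 1) i) =
        fun y => ∑ i, FF' i y (Pi.single i 1) from hre] at hdt
    rw [hdt]
    refine Finset.sum_eq_zero fun i _ => ?_
    have h1 := hface i 1 (Or.inr rfl)
    have h0 := hface i 0 (Or.inl rfl)
    rw [h1, h0, sub_zero]
  -- transfer back to the cube
  rw [setIntegral_cube]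
  have hIoo_Icc : (Set.univ.pi fun _ : Fin (n+1) => Set.Ioo (0:ℝ) 1) =ᵐ[volume]
      Set.Icc (fun _ : Fin (n+1) => (0:ℝ)) (fun _ : Fin (n+1) => (1:ℝ)) := by
    rw [MeasureTheory.volume_pi]
    exact MeasureTheory.Measure.univ_pi_Ioo_ae_eq_Icc
  rw [setIntegral_congr_set hIoo_Icc]
  refine Eq.trans ?_ hzero
  exact setIntegral_congr_fun measurableSet_Icc fun y _ => (hdiv y).symm

/-- Integration by parts for a single sine mode against a test function. -/
lemma ibp (d : ℕ) (m : Fin d → ℕ) (v : EuclideanSpace ℝ (Fin d) → ℝ) (hv : MemH01 d v) :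
    ∫ x in unitCube d, (inner ℝ (gradS d m x) (gradient v x) : ℝ) =
      π^2 * (∑ i, (m i:ℝ)^2) * ∫ x in unitCube d, Sfun d m x * v x := by
  haveI := isFiniteMeasure_restrict (d := d)
  obtain ⟨hv1, hvbd, hvL2, hGvL2⟩ := hv
  have hvc : Continuous v := hv1.continuous
  have hGvc : Continuous (fun x => gradient v x) := continuous_gradient v hv1
  have hvInt : Integrable v (volume.restrict (unitCube d)) :=
    (hvL2.mono_exponent (by norm_num : (1:ENNReal) ≤ 2)).integrable le_rfl
  have hGvInt : Integrable (fun x => gradient v x) (volume.restrict (unitCube d)) :=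
    (hGvL2.mono_exponent (by norm_num : (1:ENNReal) ≤ 2)).integrable le_rfl
  have hint1 : Integrable (fun x => (inner ℝ (gradS d m x) (gradient v x) : ℝ))
      (volume.restrict (unitCube d)) := by
    refine Integrable.mono (hGvInt.norm.const_mul (wt d m))
      ((Continuous.inner (continuous_gradS m) hGvc).aestronglyMeasurable) (ae_of_all _ fun x => ?_)
    rw [Real.norm_eq_abs, Real.norm_eq_abs]
    calc |(inner ℝ (gradS d m x) (gradient v x) : ℝ)| ≤ ‖gradS d m x‖ * ‖gradient v x‖ :=
          abs_real_inner_le_norm _ _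
      _ ≤ wt d m * ‖gradient v x‖ :=
          mul_le_mul_of_nonneg_right (norm_gradS_le_wt m x) (norm_nonneg _)
      _ ≤ |wt d m * ‖gradient v x‖| := le_abs_self _
  have hint2 : Integrable (fun x => Sfun d m x * v x) (volume.restrict (unitCube d)) := by
    refine Integrable.mono hvInt ((continuous_Sfun m).mul hvc).aestronglyMeasurable
      (ae_of_all _ fun x => ?_)
    rw [Real.norm_eq_abs, Real.norm_eq_abs, abs_mul]
    exact mul_le_of_le_one_left (abs_nonneg _) (abs_Sfun_le_one _ _)
  have hkey : ∫ x in unitCube d, ((inner ℝ (gradS d m x) (gradient v x) : ℝ) -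
      π^2 * (∑ i, (m i:ℝ)^2) * (Sfun d m x * v x)) = 0 := by
    cases d with
    | zero =>
        have hz : ∀ x : EuclideanSpace ℝ (Fin 0),
            ((inner ℝ (gradS 0 m x) (gradient v x) : ℝ) -
              π^2 * (∑ i, (m i:ℝ)^2) * (Sfun 0 m x * v x)) = 0 := by
          intro x
          rw [PiLp.inner_apply]
          simp
        simp only [hz, integral_zero]
    | succ n => exact ibp_div_succ n m v hv1 hvbd
  have hsplit := integral_sub hint1 (hint2.const_mul (π^2 * (∑ i, (m i:ℝ)^2)))
  rw [integral_const_mul] at hsplit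
  have heq2 : ∫ x in unitCube d, ((inner ℝ (gradS d m x) (gradient v x) : ℝ) -
      π^2 * (∑ i, (m i:ℝ)^2) * (Sfun d m x * v x)) =
      (∫ x in unitCube d, (inner ℝ (gradS d m x) (gradient v x) : ℝ)) -
        π^2 * (∑ i, (m i:ℝ)^2) * ∫ x in unitCube d, Sfun d m x * v x := hsplit
  rw [heq2] at hkey
  linarith

end St14

namespace St14

variable {d : ℕ}

section Final

variable {b a : (Fin d → ℕ) → ℝ}
variable (hb : Summable (fun k : Fin d → ℕ => |b k| * (1 + π^2 * knorm d k ^ 2)))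
variable (ha : Summable (fun k : Fin d → ℕ => |a k| * (1 + π^2 * knorm d k ^ 2)))

include hb ha in
lemma weak_identity (v : EuclideanSpace ℝ (Fin d) → ℝ) (hv : MemH01 d v) :
    (∫ x in unitCube d, (Wfun (ecoef b a) x * v x +
      (inner ℝ (gradient (Wfun (ecoef b a)) x) (gradient v x) : ℝ))) =
    ∫ x in unitCube d, ((∑' j, b j * Cfun d j x) * (∑' k, a k * Sfun d k x)) * v x := by
  haveI := isFiniteMeasure_restrict (d := d)
  set e := ecoef b a with hedef
  have he : Summable fun m => |e m| * wt d m := summable_ecoef_wt hb ha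
  have hv1 := hv.1
  have hvbd := hv.2.1
  have hvL2 := hv.2.2.1
  have hGvL2 := hv.2.2.2
  have hvc : Continuous v := hv1.continuous
  have hGvc : Continuous (fun x => gradient v x) := continuous_gradient v hv1
  have hvInt : Integrable v (volume.restrict (unitCube d)) :=
    (hvL2.mono_exponent (by norm_num : (1:ENNReal) ≤ 2)).integrable le_rfl
  have hGvInt : Integrable (fun x => gradient v x) (volume.restrict (unitCube d)) :=
    (hGvL2.mono_exponent (by norm_num : (1:ENNReal) ≤ 2)).integrable le_rfl
  -- basic integrability facts
  have hint2 : ∀ m : Fin d → ℕ, Integrable (fun x => Sfun d m x * v x)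
      (volume.restrict (unitCube d)) := by
    intro m
    refine Integrable.mono hvInt ((continuous_Sfun m).mul hvc).aestronglyMeasurable
      (ae_of_all _ fun x => ?_)
    rw [Real.norm_eq_abs, Real.norm_eq_abs, abs_mul]
    exact mul_le_of_le_one_left (abs_nonneg _) (abs_Sfun_le_one _ _)
  have hint1 : ∀ m : Fin d → ℕ,
      Integrable (fun x => (inner ℝ (gradS d m x) (gradient v x) : ℝ))
        (volume.restrict (unitCube d)) := by
    intro m
    refine Integrable.mono (hGvInt.norm.const_mul (wt d m))
      ((Continuous.inner (continuous_gradS m) hGvc).aestronglyMeasurable)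
      (ae_of_all _ fun x => ?_)
    rw [Real.norm_eq_abs, Real.norm_eq_abs]
    calc |(inner ℝ (gradS d m x) (gradient v x) : ℝ)| ≤ ‖gradS d m x‖ * ‖gradient v x‖ :=
          abs_real_inner_le_norm _ _
      _ ≤ wt d m * ‖gradient v x‖ :=
          mul_le_mul_of_nonneg_right (norm_gradS_le_wt m x) (norm_nonneg _)
      _ ≤ |wt d m * ‖gradient v x‖| := le_abs_self _
  -- pointwise expansion of the LHS integrand
  have hpt : ∀ x, Wfun e x * v x + (inner ℝ (gradient (Wfun e) x) (gradient v x) : ℝ) =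
      ∑' m, (e m * Sfun d m x * v x +
        e m * (inner ℝ (gradS d m x) (gradient v x) : ℝ)) := by
    intro x
    rw [gradient_Wfun e he x]
    have s1 : Summable fun m => e m * Sfun d m x * v x :=
      (summable_eS e he x).mul_right (v x)
    have s2 : Summable fun m => e m * (inner ℝ (gradS d m x) (gradient v x) : ℝ) := by
      refine Summable.of_norm (Summable.of_nonneg_of_le (fun m => norm_nonneg _)
        (fun m => ?_) (he.mul_right ‖gradient v x‖))
      rw [Real.norm_eq_abs, abs_mul]
      calc |e m| * |(inner ℝ (gradS d m x) (gradient v x) : ℝ)|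
          ≤ |e m| * (‖gradS d m x‖ * ‖gradient v x‖) :=
            mul_le_mul_of_nonneg_left (abs_real_inner_le_norm _ _) (abs_nonneg _)
        _ ≤ |e m| * (wt d m * ‖gradient v x‖) := by
            refine mul_le_mul_of_nonneg_left ?_ (abs_nonneg _)
            exact mul_le_mul_of_nonneg_right (norm_gradS_le_wt m x) (norm_nonneg _)
        _ = |e m| * wt d m * ‖gradient v x‖ := by ring
    rw [Summable.tsum_add s1 s2]
    congr 1
    · rw [Wfun, ← tsum_mul_right]
    · -- inner of the gradient series
      have hsum := summable_e_gradS e he x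
      have hL := ((innerSL ℝ (E := EuclideanSpace ℝ (Fin d))).flip
        (gradient v x)).map_tsum hsum
      have h1 : (inner ℝ (GW e x) (gradient v x) : ℝ) =
          ∑' m, (inner ℝ (e m • gradS d m x) (gradient v x) : ℝ) := by
        rw [GW]
        exact hL
      rw [h1]
      refine tsum_congr fun m => ?_
      rw [real_inner_smul_left]
  -- interchange sum and integral on the LHS
  have hLHS : (∫ x in unitCube d, (Wfun e x * v x +
      (inner ℝ (gradient (Wfun e) x) (gradient v x) : ℝ))) =
      ∑' m, ∫ x in unitCube d, (e m * Sfun d m x * v x +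
        e m * (inner ℝ (gradS d m x) (gradient v x) : ℝ)) := by
    rw [show (fun x => Wfun e x * v x +
        (inner ℝ (gradient (Wfun e) x) (gradient v x) : ℝ)) =
        fun x => ∑' m, (e m * Sfun d m x * v x +
          e m * (inner ℝ (gradS d m x) (gradient v x) : ℝ)) from funext hpt]
    refine (integral_tsum_of_summable_integral_norm (fun m => ?_) ?_).symm
    · refine (((hint2 m).const_mul (e m)).add
        (((hint1 m).const_mul (e m)) : Integrable
          (fun x => e m * (inner ℝ (gradS d m x) (gradient v x) : ℝ)) _)).congr
        (ae_of_all _ fun x => ?_)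
      simp only [Pi.add_apply]
      ring
    · -- summable integral norms
      have hg : Integrable (fun x => |v x| + ‖gradient v x‖)
          (volume.restrict (unitCube d)) := hvInt.abs.add hGvInt.norm
      set C := ∫ x in unitCube d, (|v x| + ‖gradient v x‖) with hC
      refine Summable.of_nonneg_of_le (fun m => integral_nonneg fun x => norm_nonneg _)
        (fun m => ?_) (he.mul_right C)
      have hbd : ∀ x, ‖e m * Sfun d m x * v x +
          e m * (inner ℝ (gradS d m x) (gradient v x) : ℝ)‖ ≤
          |e m| * wt d m * (|v x| + ‖gradient v x‖) := by
        intro x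
        rw [Real.norm_eq_abs]
        have h1 : |e m * Sfun d m x * v x| ≤ |e m| * wt d m * |v x| := by
          rw [abs_mul, abs_mul]
          have hS := abs_Sfun_le_one m x
          have h2 : |e m| * |Sfun d m x| ≤ |e m| * wt d m := by
            calc |e m| * |Sfun d m x| ≤ |e m| * 1 :=
                  mul_le_mul_of_nonneg_left hS (abs_nonneg _)
              _ ≤ |e m| * wt d m :=
                  mul_le_mul_of_nonneg_left (one_le_wt m) (abs_nonneg _)
          exact mul_le_mul_of_nonneg_right h2 (abs_nonneg _)
        have h2 : |e m * (inner ℝ (gradS d m x) (gradient v x) : ℝ)| ≤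
            |e m| * wt d m * ‖gradient v x‖ := by
          rw [abs_mul]
          calc |e m| * |(inner ℝ (gradS d m x) (gradient v x) : ℝ)|
              ≤ |e m| * (‖gradS d m x‖ * ‖gradient v x‖) :=
                mul_le_mul_of_nonneg_left (abs_real_inner_le_norm _ _) (abs_nonneg _)
            _ ≤ |e m| * (wt d m * ‖gradient v x‖) := by
                refine mul_le_mul_of_nonneg_left ?_ (abs_nonneg _)
                exact mul_le_mul_of_nonneg_right (norm_gradS_le_wt m x) (norm_nonneg _)
            _ = |e m| * wt d m * ‖gradient v x‖ := by ring
        calc |e m * Sfun d m x * v x + e m * (inner ℝ (gradS d m x) (gradient v x) : ℝ)|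
            ≤ |e m * Sfun d m x * v x| +
              |e m * (inner ℝ (gradS d m x) (gradient v x) : ℝ)| := abs_add_le _ _
          _ ≤ |e m| * wt d m * |v x| + |e m| * wt d m * ‖gradient v x‖ := add_le_add h1 h2
          _ = |e m| * wt d m * (|v x| + ‖gradient v x‖) := by ring
      calc (∫ x in unitCube d, ‖e m * Sfun d m x * v x +
            e m * (inner ℝ (gradS d m x) (gradient v x) : ℝ)‖)
          ≤ ∫ x in unitCube d, |e m| * wt d m * (|v x| + ‖gradient v x‖) := by
            refine integral_mono_of_nonneg (ae_of_all _ fun x => norm_nonneg _)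
              (hg.const_mul _) (ae_of_all _ fun x => hbd x)
        _ = |e m| * wt d m * C := by rw [integral_const_mul]
  -- per-term evaluation via integration by parts
  have hterm : ∀ m : Fin d → ℕ, (∫ x in unitCube d, (e m * Sfun d m x * v x +
      e m * (inner ℝ (gradS d m x) (gradient v x) : ℝ))) =
      e m * wt d m * ∫ x in unitCube d, Sfun d m x * v x := by
    intro m
    have hI := integral_add
      (((hint2 m).const_mul (e m)).congr (ae_of_all _ fun x => by ring) :
        Integrable (fun x => e m * Sfun d m x * v x) _)
      ((hint1 m).const_mul (e m))
    rw [hI]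
    have h1 : (∫ x in unitCube d, e m * Sfun d m x * v x) =
        e m * ∫ x in unitCube d, Sfun d m x * v x := by
      rw [← integral_const_mul]
      exact integral_congr_ae (ae_of_all _ fun x => by ring)
    have h2 : (∫ x in unitCube d, e m * (inner ℝ (gradS d m x) (gradient v x) : ℝ)) =
        e m * (π^2 * (∑ i, (m i:ℝ)^2) * ∫ x in unitCube d, Sfun d m x * v x) := by
      rw [integral_const_mul, ibp d m v hv]
    rw [h1, h2, wt, knorm_sq]
    ring
  -- RHS expansion
  have hRHS : (∫ x in unitCube d, ((∑' j, b j * Cfun d j x) * (∑' k, a k * Sfun d k x)) * v x) =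
      ∑' m, e m * wt d m * ∫ x in unitCube d, Sfun d m x * v x := by
    have hpt2 : ∀ x, ((∑' j, b j * Cfun d j x) * (∑' k, a k * Sfun d k x)) * v x =
        ∑' m, e m * (wt d m * Sfun d m x) * v x := by
      intro x
      rw [← (phi_hasSum hb ha x).tsum_eq, ← tsum_mul_right]
    rw [show (fun x => ((∑' j, b j * Cfun d j x) * (∑' k, a k * Sfun d k x)) * v x) =
        fun x => ∑' m, e m * (wt d m * Sfun d m x) * v x from funext hpt2]
    have hint3 : ∀ m : Fin d → ℕ, Integrable (fun x => e m * (wt d m * Sfun d m x) * v x)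
        (volume.restrict (unitCube d)) := fun m =>
      ((hint2 m).const_mul (e m * wt d m)).congr (ae_of_all _ fun x => by ring)
    have hsum3 : Summable fun m : Fin d → ℕ =>
        ∫ x in unitCube d, ‖e m * (wt d m * Sfun d m x) * v x‖ := by
      set C2 := ∫ x in unitCube d, |v x| with hC2
      refine Summable.of_nonneg_of_le (fun m => integral_nonneg fun x => norm_nonneg _)
        (fun m => ?_) (he.mul_right C2)
      have hbd : ∀ x, ‖e m * (wt d m * Sfun d m x) * v x‖ ≤ |e m| * wt d m * |v x| := by
        intro x
        rw [Real.norm_eq_abs, abs_mul, abs_mul, abs_mul, abs_of_nonneg (wt_nonneg m)]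
        have hS := abs_Sfun_le_one m x
        refine mul_le_mul_of_nonneg_right ?_ (abs_nonneg _)
        calc |e m| * (wt d m * |Sfun d m x|) ≤ |e m| * (wt d m * 1) := by
              refine mul_le_mul_of_nonneg_left ?_ (abs_nonneg _)
              exact mul_le_mul_of_nonneg_left hS (wt_nonneg m)
          _ = |e m| * wt d m := by ring
      calc (∫ x in unitCube d, ‖e m * (wt d m * Sfun d m x) * v x‖)
          ≤ ∫ x in unitCube d, |e m| * wt d m * |v x| :=
            integral_mono_of_nonneg (ae_of_all _ fun x => norm_nonneg _)
              (hvInt.abs.const_mul _) (ae_of_all _ fun x => hbd x)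
        _ = |e m| * wt d m * C2 := by rw [integral_const_mul]
    rw [← integral_tsum_of_summable_integral_norm hint3 hsum3]
    refine tsum_congr fun m => ?_
    rw [← integral_const_mul]
    exact integral_congr_ae (ae_of_all _ fun x => by ring)
  rw [hLHS, hRHS]
  exact tsum_congr hterm

end Final

end St14


/-- if `c ∈ B_c^2(Ω)` (cosine expansion with coefficients `b`) and
`u ∈ B_s^2(Ω)` (sine expansion with coefficients `a`), then `(I-Δ)_D^{-1}(cu)` lies in
`B_s^2(Ω)` with `‖(I-Δ)_D^{-1}(cu)‖_{B_s^2} ≤ ‖c‖_{B_c^2} ‖u‖_{B_s^2}`. -/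
theorem stmt14 (d : ℕ) (b a : (Fin d → ℕ) → ℝ)
    (hb : Summable (fun k : Fin d → ℕ => |b k| * (1 + π^2 * knorm d k ^ 2)))
    (ha : Summable (fun k : Fin d → ℕ => |a k| * (1 + π^2 * knorm d k ^ 2))) :
    ∃ e : (Fin d → ℕ) → ℝ,
      IsWeakSolD d
        (fun x => (∑' k : Fin d → ℕ, b k * Cfun d k x) *
          (∑' k : Fin d → ℕ, a k * Sfun d k x))
        (fun x => ∑' k : Fin d → ℕ, e k * Sfun d k x) ∧
      Summable (fun k : Fin d → ℕ => |e k| * (1 + π^2 * knorm d k ^ 2)) ∧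
      (∑' k : Fin d → ℕ, |e k| * (1 + π^2 * knorm d k ^ 2)) ≤
        (∑' k : Fin d → ℕ, |b k| * (1 + π^2 * knorm d k ^ 2)) *
          (∑' k : Fin d → ℕ, |a k| * (1 + π^2 * knorm d k ^ 2)) := by
  refine ⟨St14.ecoef b a, ⟨?_, ?_⟩, ?_, ?_⟩
  · exact St14.memH01_Wfun (St14.ecoef b a) (St14.summable_ecoef_wt hb ha)
  · intro v hv
    exact St14.weak_identity hb ha v hv
  · exact St14.summable_ecoef_wt hb ha
  · exact St14.tsum_ecoef_wt_le hb ha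
end

section
/- Let g ∈ C²([−√d, √d]) with ‖g^{(s)}‖_∞ ≤ B for s = 0,1,2, and suppose g'(α) = 0 for some α ∈ (−√d, √d). Then for every positive integer m there exists a piecewise-linear function g_m of the form g_m(z) = c + Σ_{i=1}^{2m} a_i ReLU(ε_i z + b_i) with |c| ≤ B, |a_i| ≤ 4√d B/m, ε_i ∈ {±1}, |b_i| ≤ √d, such that ‖g − g_m‖_{H^1([−√d,√d])} ≤ √10 · d^{5/4} B / m. -/
set_option maxHeartbeats 4000000
open MeasureTheory Set intervalIntegral

lemma integ_lin (u v c C : ℝ) : ∫ t in u..v, C * (t - c) = C * ((v-c)^2 - (u-c)^2)/2 := by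
  have h : ∀ t ∈ Set.uIcc u v, HasDerivAt (fun t => C * (t-c)^2/2) (C * (t - c)) t := by
    intro t _
    have : HasDerivAt (fun t : ℝ => C * (t-c)^2/2) (C * (2 * (t-c)^(2-1) * 1)/2) t :=
      (((hasDerivAt_id t).sub_const c).pow 2).const_mul C |>.div_const 2
    simpa using this.congr_deriv (by ring)
  rw [intervalIntegral.integral_eq_sub_of_hasDerivAt h
    (Continuous.intervalIntegrable (by continuity) u v)]
  ring

lemma integ_sq (u v c C : ℝ) : ∫ t in u..v, C * (t - c)^2 = C * ((v-c)^3 - (u-c)^3)/3 := by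
  have h : ∀ t ∈ Set.uIcc u v, HasDerivAt (fun t => C * (t-c)^3/3) (C * (t - c)^2) t := by
    intro t _
    have : HasDerivAt (fun t : ℝ => C * (t-c)^3/3) (C * (3 * (t-c)^(3-1) * 1)/3) t :=
      (((hasDerivAt_id t).sub_const c).pow 3).const_mul C |>.div_const 3
    simpa using this.congr_deriv (by ring)
  rw [intervalIntegral.integral_eq_sub_of_hasDerivAt h
    (Continuous.intervalIntegrable (by continuity) u v)]
  ring

lemma taylor_step {α β B : ℝ} {φ φ' : ℝ → ℝ}
    (hder : ∀ x ∈ Icc α β, HasDerivWithinAt φ (φ' x) (Icc α β) x)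
    (hcont' : ContinuousOn φ' (Icc α β))
    (hlip : ∀ x ∈ Icc α β, ∀ y ∈ Icc α β, |φ' x - φ' y| ≤ B * |x - y|)
    {u v : ℝ} (hu : α ≤ u) (huv : u ≤ v) (hv : v ≤ β) :
    |φ v - φ u - φ' u * (v - u)| ≤ B * (v - u)^2 / 2 := by
  have hsub : Icc u v ⊆ Icc α β := Icc_subset_Icc hu hv
  have hφc : ContinuousOn φ (Icc α β) := fun x hx => (hder x hx).continuousWithinAt
  have humem : u ∈ Icc α β := ⟨hu, le_trans huv hv⟩
  have hint' : IntervalIntegrable φ' volume u v := by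
    apply ContinuousOn.intervalIntegrable
    rw [uIcc_of_le huv]; exact hcont'.mono hsub
  have hftc : ∫ t in u..v, φ' t = φ v - φ u := by
    apply intervalIntegral.integral_eq_sub_of_hasDeriv_right_of_le huv (hφc.mono hsub)
      (fun x hx => ?_) hint'
    · exact (hder x (hsub (Ioo_subset_Icc_self hx))).mono_of_mem_nhdsWithin
        (Filter.mem_of_superset (Ioo_mem_nhdsGT_of_mem ⟨le_refl x, lt_of_lt_of_le hx.2 hv⟩)
          (fun y hy => ⟨le_trans hu (le_of_lt (lt_of_le_of_lt hx.1.le hy.1)), le_of_lt hy.2⟩))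
  have hconst : ∫ t in u..v, φ' u = φ' u * (v - u) := by
    simp [intervalIntegral.integral_const, mul_comm]
  have hid : φ v - φ u - φ' u * (v - u) = ∫ t in u..v, (φ' t - φ' u) := by
    rw [intervalIntegral.integral_sub hint' (intervalIntegrable_const), hftc, hconst]
  have hbound : ∀ t ∈ Icc u v, |φ' t - φ' u| ≤ B * (t - u) := by
    intro t ht
    have := hlip t (hsub ht) u humem
    rwa [abs_of_nonneg (by linarith [ht.1] : (0:ℝ) ≤ t - u)] at this
  have hint1 : IntervalIntegrable (fun t => φ' t - φ' u) volume u v :=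
    hint'.sub intervalIntegrable_const
  have hint2 : IntervalIntegrable (fun t => B * (t - u)) volume u v :=
    Continuous.intervalIntegrable (by continuity) u v
  have hle1 : ∫ t in u..v, (φ' t - φ' u) ≤ B * (v - u)^2/2 := by
    calc ∫ t in u..v, (φ' t - φ' u) ≤ ∫ t in u..v, B * (t - u) := by
          apply intervalIntegral.integral_mono_on huv hint1 hint2
          intro t ht; linarith [hbound t ht, abs_nonneg (φ' t - φ' u),
            le_abs_self (φ' t - φ' u)]
      _ = B * (v - u)^2/2 := by rw [integ_lin]; ring_nf
  have hle2 : -(B * (v - u)^2/2) ≤ ∫ t in u..v, (φ' t - φ' u) := by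
    have : ∫ t in u..v, (-(B * (t - u))) ≤ ∫ t in u..v, (φ' t - φ' u) := by
      apply intervalIntegral.integral_mono_on huv
        (Continuous.intervalIntegrable (by continuity) u v) hint1
      intro t ht; linarith [hbound t ht, neg_abs_le (φ' t - φ' u)]
    have heq : ∫ t in u..v, (-(B * (t - u))) = -(B * (v - u)^2/2) := by
      have := integ_lin u v u (-B)
      simp only [neg_mul] at this
      rw [this]; ring
    linarith [heq ▸ this]
  rw [hid]
  exact abs_le.mpr ⟨hle2, hle1⟩

section
variable {α β B ℓ : ℝ} {φ φ' : ℝ → ℝ}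

lemma core (hB : 0 ≤ B) (hαβ : α < β) (m : ℕ) (hm : 0 < m) (hℓ : ℓ = (β - α)/m)
    (hder : ∀ x ∈ Icc α β, HasDerivWithinAt φ (φ' x) (Icc α β) x)
    (hcont' : ContinuousOn φ' (Icc α β))
    (hlip : ∀ x ∈ Icc α β, ∀ y ∈ Icc α β, |φ' x - φ' y| ≤ B * |x - y|)
    (hα0 : φ' α = 0) :
    ∃ a : Fin m → ℝ,
      (∀ j, |a j| ≤ B * ℓ) ∧
      (∀ z, z ≤ α → ∑ j : Fin m, a j * max (z - (α + (j:ℕ) * ℓ)) 0 = 0) ∧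
      (∀ z ∈ Icc α β, |φ z - φ α - ∑ j : Fin m, a j * max (z - (α + (j:ℕ) * ℓ)) 0|
          ≤ B * ℓ / 2 * (z - α)) ∧
      (∀ j : ℕ, j < m → ∀ z ∈ Ioo (α + (j:ℝ) * ℓ) (α + ((j:ℝ)+1) * ℓ),
          HasDerivAt (fun w => ∑ i : Fin m, a i * max (w - (α + (i:ℕ) * ℓ)) 0)
            (φ' (α + (j:ℝ) * ℓ)) z) := by
  have hmR : (0:ℝ) < m := Nat.cast_pos.mpr hm
  have hℓpos : 0 < ℓ := hℓ ▸ div_pos (by linarith) hmR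
  have hmℓ : (m:ℝ) * ℓ = β - α := by rw [hℓ]; field_simp
  obtain ⟨node, hnode⟩ : ∃ f : ℕ → ℝ, ∀ k, f k = α + (k:ℝ) * ℓ :=
    ⟨fun k => α + (k:ℝ) * ℓ, fun _ => rfl⟩
  have hnode_le : ∀ {i k : ℕ}, i ≤ k → node i ≤ node k := by
    intro i k hik
    rw [hnode, hnode]
    have h1 : (i:ℝ) ≤ (k:ℝ) := Nat.cast_le.mpr hik
    nlinarith
  have hnode_mem : ∀ k, k ≤ m → node k ∈ Icc α β := by
    intro k hk
    constructor
    · have := mul_nonneg (Nat.cast_nonneg k : (0:ℝ) ≤ (k:ℝ)) hℓpos.le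
      rw [hnode]; linarith
    · have h1 : node k ≤ node m := hnode_le hk
      rw [hnode, hnode] at h1; rw [hnode]; linarith [hmℓ]
  have hnode0 : node 0 = α := by rw [hnode]; simp
  have hnodem : node m = β := by rw [hnode]; linarith [hmℓ]
  have hnode_step : ∀ k : ℕ, node (k+1) = node k + ℓ := by
    intro k; rw [hnode, hnode]; push_cast; ring
  -- coefficients
  obtain ⟨tfun, htfun0, htfunS⟩ :
      ∃ t : ℕ → ℝ, t 0 = 0 ∧ ∀ k, t (k+1) = φ' (node k) :=
    ⟨fun k => match k with | 0 => (0:ℝ) | (j+1) => φ' (node j), rfl, fun _ => rfl⟩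
  obtain ⟨aN, haN⟩ : ∃ aa : ℕ → ℝ, ∀ k, aa k = tfun (k+1) - tfun k :=
    ⟨fun k => tfun (k+1) - tfun k, fun _ => rfl⟩
  -- the Q function
  obtain ⟨Q, hQ_def⟩ :
      ∃ q : ℝ → ℝ, q = fun z => ∑ j : Fin m, aN (j:ℕ) * max (z - node (j:ℕ)) 0 :=
    ⟨_, rfl⟩
  -- coefficient bound
  have ha_bound : ∀ k, k < m → |aN k| ≤ B * ℓ := by
    intro k hk
    match k with
    | 0 =>
      have : aN 0 = 0 := by
        rw [haN 0, htfun0, htfunS, hnode0, hα0]; ring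
      rw [this, abs_zero]
      exact mul_nonneg hB hℓpos.le
    | (k+1) =>
      have h1 : aN (k+1) = φ' (node (k+1)) - φ' (node k) := by
        rw [haN, htfunS, htfunS]
      rw [h1]
      have h2 := hlip (node (k+1)) (hnode_mem _ hk.le) (node k) (hnode_mem _ (by omega))
      have h3 : |node (k+1) - node k| = ℓ := by
        rw [hnode_step]; simp [abs_of_nonneg hℓpos.le]
      rw [h3] at h2
      exact h2
  -- Q vanishes left of α
  have hQ0 : ∀ z, z ≤ α → Q z = 0 := by
    intro z hz
    rw [hQ_def]
    apply Finset.sum_eq_zero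
    intro j _
    have : z ≤ node (j:ℕ) := le_trans hz (hnode0 ▸ hnode_le (Nat.zero_le _))
    rw [max_eq_right (by linarith), mul_zero]
  -- cut sums
  have hsum_cut : ∀ (c : ℝ) (k : ℕ), k < m →
      (∑ i : Fin m, (if (i:ℕ) ≤ k then aN (i:ℕ) * c else 0)) = tfun (k+1) * c := by
    intro c k hk
    have h1 : (∑ i : Fin m, (if (i:ℕ) ≤ k then aN (i:ℕ) * c else 0))
        = ∑ i ∈ Finset.range m, (if i ≤ k then aN i * c else 0) :=
      Fin.sum_univ_eq_sum_range (fun i => if i ≤ k then aN i * c else 0) m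
    have h2 : ∑ i ∈ Finset.range (k+1), (if i ≤ k then aN i * c else 0)
        = ∑ i ∈ Finset.range m, (if i ≤ k then aN i * c else 0) := by
      apply Finset.sum_subset (Finset.range_subset_range.mpr (by omega))
      intro i hi hni
      rw [if_neg (by simp at hni ⊢; omega)]
    have h3 : ∑ i ∈ Finset.range (k+1), (if i ≤ k then aN i * c else 0)
        = ∑ i ∈ Finset.range (k+1), (aN i * c) := by
      apply Finset.sum_congr rfl
      intro i hi
      rw [if_pos (by simp at hi; omega)]
    have h4 : ∑ i ∈ Finset.range (k+1), (aN i * c) = (tfun (k+1) - tfun 0) * c := by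
      rw [← Finset.sum_mul]
      congr 1
      simp only [haN]
      exact Finset.sum_range_sub tfun (k+1)
    rw [h1, ← h2, h3, h4, htfun0]; ring
  -- increment formula
  have hQincr : ∀ k, k < m → ∀ z ∈ Icc (node k) (node (k+1)),
      Q z - Q (node k) = φ' (node k) * (z - node k) := by
    intro k hk z hz
    have hterm : ∀ j : Fin m, aN (j:ℕ) * max (z - node (j:ℕ)) 0
        - aN (j:ℕ) * max (node k - node (j:ℕ)) 0
        = (if (j:ℕ) ≤ k then aN (j:ℕ) * (z - node k) else 0) := by
      intro j
      by_cases hj : (j:ℕ) ≤ k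
      · rw [if_pos hj]
        have h1 : node (j:ℕ) ≤ node k := hnode_le hj
        rw [max_eq_left (by linarith [hz.1]), max_eq_left (by linarith)]
        ring
      · rw [if_neg hj]
        push_neg at hj
        have h1 : node (k+1) ≤ node (j:ℕ) := hnode_le (by omega)
        have h2 : node k ≤ node (j:ℕ) := hnode_le (by omega)
        rw [max_eq_right (by linarith [hz.2]), max_eq_right (by linarith)]
        ring
    have : Q z - Q (node k)
        = ∑ j : Fin m, (aN (j:ℕ) * max (z - node (j:ℕ)) 0
            - aN (j:ℕ) * max (node k - node (j:ℕ)) 0) := by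
      rw [hQ_def, Finset.sum_sub_distrib]
    rw [this, Finset.sum_congr rfl (fun j _ => hterm j), hsum_cut _ k hk, htfunS]
  -- node error bound
  have hNode : ∀ k, k ≤ m → |φ (node k) - φ α - Q (node k)| ≤ B * ℓ^2 * k / 2 := by
    intro k
    induction k with
    | zero =>
      intro _
      rw [hnode0, hQ0 α le_rfl]
      simp
    | succ k IH =>
      intro hk1
      have hkm : k < m := by omega
      have hIH := IH (by omega)
      have hq := hQincr k hkm (node (k+1)) ⟨hnode_le (by omega), le_rfl⟩
      have ht := taylor_step hder hcont' hlip (hnode_mem k (by omega)).1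
        (hnode_le (Nat.le_succ k)) (hnode_mem (k+1) hk1).2
      have hstep : node (k+1) - node k = ℓ := by rw [hnode_step]; ring
      rw [hstep] at hq
      have hrw : φ (node (k+1)) - φ α - Q (node (k+1))
          = (φ (node k) - φ α - Q (node k))
            + (φ (node (k+1)) - φ (node k) - φ' (node k) * ℓ) := by
        linarith [hq]
      rw [hrw]
      rw [hstep] at ht
      push_cast
      calc |_ + _| ≤ |φ (node k) - φ α - Q (node k)|
            + |φ (node (k+1)) - φ (node k) - φ' (node k) * ℓ| := abs_add_le _ _
        _ ≤ B * ℓ^2 * k / 2 + B * ℓ^2 / 2 := add_le_add hIH ht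
        _ = B * ℓ^2 * ((k:ℝ)+1) / 2 := by ring
  -- pointwise E1 bound
  have hE1 : ∀ k, k ≤ m → ∀ z ∈ Icc α β, z ≤ node k
      → |φ z - φ α - Q z| ≤ B * ℓ / 2 * (z - α) := by
    intro k
    induction k with
    | zero =>
      intro _ z hz hzle
      rw [hnode0] at hzle
      have hzα : z = α := le_antisymm hzle hz.1
      subst hzα
      rw [hQ0 z le_rfl]
      simp
    | succ k IH =>
      intro hk1 z hz hzle
      by_cases hc : z ≤ node k
      · exact IH (by omega) z hz hc
      push_neg at hc
      have hkm : k < m := by omega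
      have hq := hQincr k hkm z ⟨hc.le, hzle⟩
      have ht := taylor_step hder hcont' hlip (hnode_mem k (by omega)).1 hc.le hz.2
      have hN := hNode k (by omega)
      have hzk : z - node k ≤ ℓ := by
        have := hnode_step k; linarith [hzle]
      have hrw : φ z - φ α - Q z
          = (φ (node k) - φ α - Q (node k))
            + (φ z - φ (node k) - φ' (node k) * (z - node k)) := by
        linarith [hq]
      have hka : node k - α = k * ℓ := by rw [hnode]; ring
      rw [hrw]
      calc |_ + _| ≤ |φ (node k) - φ α - Q (node k)|
            + |φ z - φ (node k) - φ' (node k) * (z - node k)| := abs_add_le _ _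
        _ ≤ B * ℓ^2 * k / 2 + B * (z - node k)^2 / 2 := by linarith [hN, ht]
        _ ≤ B * ℓ / 2 * (z - α) := by
            have h5 : (0:ℝ) ≤ z - node k := sub_nonneg.mpr hc.le
            have h7' : (z - node k)^2 ≤ ℓ * (z - node k) := by
              rw [sq]; exact mul_le_mul_of_nonneg_right hzk h5
            have h7 : B * (z - node k)^2 ≤ B * (ℓ * (z - node k)) :=
              mul_le_mul_of_nonneg_left h7' hB
            have hsplit : z - α = (k:ℝ) * ℓ + (z - node k) := by linarith [hka]
            have h8 : B * ℓ^2 * (k:ℝ)/2 + B * (z - node k)^2/2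
                ≤ B * ℓ^2 * (k:ℝ)/2 + B * (ℓ * (z - node k))/2 := by linarith
            have h9 : B * ℓ^2 * (k:ℝ)/2 + B * (ℓ * (z - node k))/2
                = B * ℓ/2 * ((k:ℝ) * ℓ + (z - node k)) := by ring
            rw [hsplit]
            linarith [h8, h9]
  -- derivative of Q on open subintervals
  have hC3 : ∀ j : ℕ, j < m → ∀ z ∈ Ioo (node j) (node (j+1)),
      HasDerivAt Q (φ' (node j)) z := by
    intro j hj z hz
    have hterm : ∀ i : Fin m, HasDerivAt (fun w => aN (i:ℕ) * max (w - node (i:ℕ)) 0)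
        (if (i:ℕ) ≤ j then aN (i:ℕ) * 1 else 0) z := by
      intro i
      by_cases hij : (i:ℕ) ≤ j
      · rw [if_pos hij]
        have hlt : node (i:ℕ) < z := lt_of_le_of_lt (hnode_le hij) hz.1
        have hev : (fun w => aN (i:ℕ) * (w - node (i:ℕ)))
            =ᶠ[nhds z] (fun w => aN (i:ℕ) * max (w - node (i:ℕ)) 0) := by
          filter_upwards [eventually_gt_nhds hlt] with w hw
          rw [max_eq_left (by linarith)]
        have hd : HasDerivAt (fun w => aN (i:ℕ) * (w - node (i:ℕ))) (aN (i:ℕ) * 1) z :=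
          ((hasDerivAt_id z).sub_const (node (i:ℕ))).const_mul (aN (i:ℕ))
        exact hd.congr_of_eventuallyEq hev.symm
      · rw [if_neg hij]
        push_neg at hij
        have hlt : z < node (i:ℕ) := lt_of_lt_of_le hz.2 (hnode_le (by omega))
        have hev : (fun _ : ℝ => (0:ℝ))
            =ᶠ[nhds z] (fun w => aN (i:ℕ) * max (w - node (i:ℕ)) 0) := by
          filter_upwards [eventually_lt_nhds hlt] with w hw
          rw [max_eq_right (by linarith), mul_zero]
        exact (hasDerivAt_const z (0:ℝ)).congr_of_eventuallyEq hev.symm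
    have hsum := HasDerivAt.sum (u := Finset.univ) (A := fun (i : Fin m) w => aN (i:ℕ) * max (w - node (i:ℕ)) 0)
      (A' := fun i => if (i:ℕ) ≤ j then aN (i:ℕ) * 1 else 0) (fun i _ => hterm i)
    rw [hsum_cut 1 j hj, htfunS, mul_one] at hsum
    rw [hQ_def]
    rw [Finset.sum_fn] at hsum
    exact hsum
  refine ⟨fun j => aN (j:ℕ), fun j => ha_bound (j:ℕ) j.isLt, ?_, ?_, ?_⟩
  · intro z hz
    have h := hQ0 z hz
    simpa only [hQ_def, hnode] using h
  · intro z hz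
    have h := hE1 m le_rfl z hz (by rw [hnodem]; exact hz.2)
    simpa only [hQ_def, hnode] using h
  · intro j hj z hz
    have hz' : z ∈ Ioo (node j) (node (j+1)) := by
      rw [hnode, hnode]; push_cast; exact hz
    have h := hC3 j hj z hz'
    rw [hQ_def] at h
    rw [hnode] at h
    simpa only [hnode] using h

lemma sideE2 {α β B ℓ : ℝ} (hB : 0 ≤ B) (hαβ : α < β) {m : ℕ} (hm : 0 < m)
    (hℓ : ℓ = (β - α)/m) {ψ D : ℝ → ℝ} (s : ℕ → ℝ)
    (hψ : ContinuousOn ψ (Icc α β))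
    (hone : ∀ j : ℕ, j < m → ∀ z ∈ Ioo (α + (j:ℝ)*ℓ) (α + ((j:ℝ)+1)*ℓ),
        D z = s j ∧ |ψ z - s j| ≤ B * (z - (α + (j:ℝ)*ℓ))) :
    IntervalIntegrable (fun z => (ψ z - D z)^2) volume α β ∧
    ∫ z in α..β, (ψ z - D z)^2 ≤ B^2 * ℓ^2 * (β - α) / 3 := by
  have hmR : (0:ℝ) < m := Nat.cast_pos.mpr hm
  have hℓpos : 0 < ℓ := hℓ ▸ div_pos (by linarith) hmR
  have hmℓ : (m:ℝ) * ℓ = β - α := by rw [hℓ]; field_simp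
  obtain ⟨nd, hnd⟩ : ∃ f : ℕ → ℝ, ∀ k, f k = α + (k:ℝ) * ℓ :=
    ⟨fun k => α + (k:ℝ) * ℓ, fun _ => rfl⟩
  have hnd_le : ∀ {i k : ℕ}, i ≤ k → nd i ≤ nd k := by
    intro i k hik
    rw [hnd, hnd]
    have h1 : (i:ℝ) ≤ (k:ℝ) := Nat.cast_le.mpr hik
    nlinarith
  have hnd0 : nd 0 = α := by rw [hnd]; simp
  have hndm : nd m = β := by rw [hnd]; linarith [hmℓ]
  have hnd_step : ∀ k : ℕ, nd (k+1) = nd k + ℓ := by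
    intro k; rw [hnd, hnd]; push_cast; ring
  have hnd_mem : ∀ k, k ≤ m → nd k ∈ Icc α β := by
    intro k hk
    constructor
    · have := mul_nonneg (Nat.cast_nonneg k : (0:ℝ) ≤ (k:ℝ)) hℓpos.le
      rw [hnd]; linarith
    · have h1 : nd k ≤ nd m := hnd_le hk
      rwa [hndm] at h1
  have hIoo : ∀ k, k < m → ∀ z, z ∈ Ioo (nd k) (nd (k+1))
      → z ∈ Ioo (α + (k:ℝ)*ℓ) (α + ((k:ℝ)+1)*ℓ) := by
    intro k hk z hz
    rw [hnd, hnd] at hz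
    push_cast at hz
    exact hz
  -- per-piece facts
  have hpiece : ∀ k, k < m →
      IntervalIntegrable (fun z => (ψ z - D z)^2) volume (nd k) (nd (k+1)) ∧
      ∫ z in nd k..nd (k+1), (ψ z - D z)^2 ≤ B^2 * ℓ^3 / 3 := by
    intro k hk
    have hle : nd k ≤ nd (k+1) := hnd_le (Nat.le_succ k)
    have hsub : Icc (nd k) (nd (k+1)) ⊆ Icc α β :=
      Icc_subset_Icc (hnd_mem k (by omega)).1 (hnd_mem (k+1) (by omega)).2
    have hcont_piece : ContinuousOn (fun z => (ψ z - s k)^2) (Icc (nd k) (nd (k+1))) :=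
      (((hψ.mono hsub).sub continuousOn_const).pow 2)
    have hint_piece : IntegrableOn (fun z => (ψ z - s k)^2) (Icc (nd k) (nd (k+1))) volume :=
      hcont_piece.integrableOn_Icc
    have hae : (fun z => (ψ z - D z)^2)
        =ᵐ[volume.restrict (Ioc (nd k) (nd (k+1)))] (fun z => (ψ z - s k)^2) := by
      rw [← Measure.restrict_congr_set Ioo_ae_eq_Ioc]
      refine (ae_restrict_iff' measurableSet_Ioo).2 (ae_of_all _ ?_)
      intro z hz
      show (ψ z - D z)^2 = (ψ z - s k)^2
      rw [(hone k hk z (hIoo k hk z hz)).1]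
    have hII : IntervalIntegrable (fun z => (ψ z - D z)^2) volume (nd k) (nd (k+1)) := by
      rw [intervalIntegrable_iff_integrableOn_Ioc_of_le hle]
      exact ((hint_piece.mono_set Ioc_subset_Icc_self).congr hae.symm)
    refine ⟨hII, ?_⟩
    have hbound_int : IntegrableOn (fun z => B^2 * (z - nd k)^2) (Ioo (nd k) (nd (k+1))) volume := by
      apply MeasureTheory.IntegrableOn.mono_set _ Ioo_subset_Icc_self
      exact ContinuousOn.integrableOn_Icc (by fun_prop)
    calc ∫ z in nd k..nd (k+1), (ψ z - D z)^2
        = ∫ z in Ioc (nd k) (nd (k+1)), (ψ z - D z)^2 := by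
          rw [intervalIntegral.integral_of_le hle]
      _ = ∫ z in Ioc (nd k) (nd (k+1)), (ψ z - s k)^2 := integral_congr_ae hae
      _ = ∫ z in Ioo (nd k) (nd (k+1)), (ψ z - s k)^2 := integral_Ioc_eq_integral_Ioo
      _ ≤ ∫ z in Ioo (nd k) (nd (k+1)), B^2 * (z - nd k)^2 := by
          apply setIntegral_mono_on (hint_piece.mono_set Ioo_subset_Icc_self)
            hbound_int measurableSet_Ioo
          intro z hz
          have h2 := (hone k hk z (hIoo k hk z hz)).2
          have h3 : z - (α + (k:ℝ)*ℓ) = z - nd k := by rw [hnd]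
          rw [h3] at h2
          have h4 : (ψ z - s k)^2 ≤ (B * (z - nd k))^2 := by
            have := abs_le.1 h2
            exact sq_le_sq' (by linarith [this.1]) this.2
          calc (ψ z - s k)^2 ≤ (B * (z - nd k))^2 := h4
            _ = B^2 * (z - nd k)^2 := by ring
      _ = ∫ z in Ioc (nd k) (nd (k+1)), B^2 * (z - nd k)^2 := integral_Ioc_eq_integral_Ioo.symm
      _ = ∫ z in nd k..nd (k+1), B^2 * (z - nd k)^2 := by
          rw [intervalIntegral.integral_of_le hle]
      _ = B^2 * ((nd (k+1) - nd k)^3 - (nd k - nd k)^3)/3 := integ_sq _ _ _ _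
      _ = B^2 * ℓ^3 / 3 := by rw [hnd_step]; ring_nf
  have hII : IntervalIntegrable (fun z => (ψ z - D z)^2) volume α β := by
    have := IntervalIntegrable.trans_iterate (a := nd) (n := m)
      (fun k hk => (hpiece k hk).1)
    rwa [hnd0, hndm] at this
  refine ⟨hII, ?_⟩
  have hsum := intervalIntegral.sum_integral_adjacent_intervals (a := nd) (n := m)
    (μ := volume) (f := fun z => (ψ z - D z)^2) (fun k hk => (hpiece k hk).1)
  rw [hnd0, hndm] at hsum
  rw [← hsum]
  calc ∑ k ∈ Finset.range m, ∫ z in nd k..nd (k+1), (ψ z - D z)^2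
      ≤ ∑ k ∈ Finset.range m, (B^2 * ℓ^3 / 3) :=
        Finset.sum_le_sum (fun k hk => (hpiece k (Finset.mem_range.1 hk)).2)
    _ = m * (B^2 * ℓ^3 / 3) := by
        rw [Finset.sum_const, Finset.card_range]; simp [nsmul_eq_mul]
    _ = B^2 * ℓ^2 * (β - α) / 3 := by rw [← hmℓ]; ring


lemma fin_two_split {m : ℕ} (F : ℕ → ℝ) (G1 G2 : Fin m → ℝ)
    (h1 : ∀ j : Fin m, F (j : ℕ) = G1 j) (h2 : ∀ j : Fin m, F (m + (j : ℕ)) = G2 j) :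
    ∑ i : Fin (2*m), F (i : ℕ) = ∑ j : Fin m, G1 j + ∑ j : Fin m, G2 j := by
  rw [Fin.sum_univ_eq_sum_range F (2*m), two_mul, Finset.sum_range_add]
  congr 1
  · rw [← Fin.sum_univ_eq_sum_range F m]
    exact Finset.sum_congr rfl (fun j _ => h1 j)
  · rw [← Fin.sum_univ_eq_sum_range (fun n => F (m + n)) m]
    exact Finset.sum_congr rfl (fun j _ => h2 j)

/-- one-dimensional ReLU approximation of a `C²` function on
`I_d = [−√d, √d]` with `‖g^{(s)}‖_∞ ≤ B` (`s = 0,1,2`) and a critical point `α` in the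
interior: for every `m ≥ 1` there is `g_m(z) = c + Σ_{i=1}^{2m} a_i ReLU(ε_i z + b_i)`
with `|c| ≤ B`, `|a_i| ≤ 4√d B/m`, `ε_i = ±1`, `|b_i| ≤ √d`, and
`‖g − g_m‖_{H¹(I_d)} ≤ √10 d^{5/4} B / m`. -/
theorem stmt18 (d : ℕ) (hd : 0 < d) (B : ℝ) (hB : 0 ≤ B) (g : ℝ → ℝ)
    (hg : ContDiffOn ℝ 2 g (Set.Icc (-Real.sqrt d) (Real.sqrt d)))
    (hg0 : ∀ x ∈ Set.Icc (-Real.sqrt d) (Real.sqrt d), |g x| ≤ B)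
    (hg1 : ∀ x ∈ Set.Icc (-Real.sqrt d) (Real.sqrt d),
      |derivWithin g (Set.Icc (-Real.sqrt d) (Real.sqrt d)) x| ≤ B)
    (hg2 : ∀ x ∈ Set.Icc (-Real.sqrt d) (Real.sqrt d),
      |derivWithin (derivWithin g (Set.Icc (-Real.sqrt d) (Real.sqrt d)))
        (Set.Icc (-Real.sqrt d) (Real.sqrt d)) x| ≤ B)
    (α : ℝ) (hα : α ∈ Set.Ioo (-Real.sqrt d) (Real.sqrt d))
    (hα' : derivWithin g (Set.Icc (-Real.sqrt d) (Real.sqrt d)) α = 0)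
    (m : ℕ) (hm : 0 < m) :
    ∃ (c : ℝ) (a ε b : Fin (2 * m) → ℝ),
      |c| ≤ B ∧
      (∀ i, |a i| ≤ 4 * Real.sqrt d * B / m ∧ (ε i = 1 ∨ ε i = -1) ∧ |b i| ≤ Real.sqrt d) ∧
      Real.sqrt
        ((∫ z in Set.Icc (-Real.sqrt d) (Real.sqrt d),
            (g z - (c + ∑ i, a i * max (ε i * z + b i) 0))^2) +
          ∫ z in Set.Icc (-Real.sqrt d) (Real.sqrt d),
            (derivWithin g (Set.Icc (-Real.sqrt d) (Real.sqrt d)) z -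
              deriv (fun w => c + ∑ i, a i * max (ε i * w + b i) 0) z)^2) ≤
        Real.sqrt 10 * (d : ℝ) ^ ((5 : ℝ)/4) * B / m := by
  classical
  obtain ⟨r, hr⟩ : ∃ r : ℝ, r = Real.sqrt d := ⟨_, rfl⟩
  rw [← hr] at hg hg0 hg1 hg2 hα hα' ⊢
  have hr1 : (1:ℝ) ≤ r := by
    rw [hr]
    have : Real.sqrt 1 ≤ Real.sqrt d := Real.sqrt_le_sqrt (by exact_mod_cast hd)
    simpa using this
  have hrpos : (0:ℝ) < r := by linarith
  have hmR : (0:ℝ) < m := Nat.cast_pos.mpr hm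
  have hαL : -r < α := hα.1
  have hαR : α < r := hα.2
  obtain ⟨g', hg'defn⟩ : ∃ f : ℝ → ℝ, f = derivWithin g (Icc (-r) r) := ⟨_, rfl⟩
  rw [← hg'defn] at hα' hg1 hg2 ⊢
  have huI : UniqueDiffOn ℝ (Icc (-r) r) := uniqueDiffOn_Icc (by linarith)
  have hgc : ContinuousOn g (Icc (-r) r) := hg.continuousOn
  have hgd : DifferentiableOn ℝ g (Icc (-r) r) := hg.differentiableOn (by norm_num)
  have hder : ∀ x ∈ Icc (-r) r, HasDerivWithinAt g (g' x) (Icc (-r) r) x := by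
    intro x hx; rw [hg'defn]; exact (hgd x hx).hasDerivWithinAt
  have hC1 : ContDiffOn ℝ 1 g' (Icc (-r) r) := by
    rw [hg'defn]; exact hg.derivWithin huI (by norm_num)
  have hcont' : ContinuousOn g' (Icc (-r) r) := hC1.continuousOn
  have hg'd : DifferentiableOn ℝ g' (Icc (-r) r) := hC1.differentiableOn (by norm_num)
  have hg2' : ∀ x ∈ Icc (-r) r, ‖derivWithin g' (Icc (-r) r) x‖ ≤ B := by
    intro x hx
    rw [Real.norm_eq_abs]
    have h1 : derivWithin g' (Icc (-r) r) x
        = derivWithin (derivWithin g (Icc (-r) r)) (Icc (-r) r) x := by rw [hg'defn]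
    rw [h1, ← hg'defn]
    exact hg2 x hx
  have hlip : ∀ x ∈ Icc (-r) r, ∀ y ∈ Icc (-r) r, |g' x - g' y| ≤ B * |x - y| := by
    intro x hx y hy
    have h := Convex.norm_image_sub_le_of_norm_derivWithin_le hg'd hg2' (convex_Icc _ _) hy hx
    simpa [Real.norm_eq_abs] using h
  -- apply the core construction on the right side [α, r]
  have hsubR : Icc α r ⊆ Icc (-r) r := Icc_subset_Icc (by linarith) le_rfl
  obtain ⟨aR, haRb, hQR0, hE1R, hdRder⟩ := core (φ := g) (φ' := g') hB hαR m hm rfl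
    (fun x hx => (hder x (hsubR hx)).mono hsubR)
    (hcont'.mono hsubR)
    (fun x hx y hy => hlip x (hsubR hx) y (hsubR hy))
    hα'
  -- left side via reflection, on [-α, r]
  have hnegmem : ∀ {u : ℝ}, u ∈ Icc (-α) r → -u ∈ Icc (-r) r := by
    intro u hu
    exact ⟨by linarith [hu.2], by linarith [hu.1]⟩
  have hαR2 : -α < r := by linarith
  have hderL : ∀ x ∈ Icc (-α) r,
      HasDerivWithinAt (fun u => g (-u)) (-(g' (-x))) (Icc (-α) r) x := by
    intro x hx
    have h1 : HasDerivWithinAt g (g' (-x)) (Icc (-r) r) (-x) := hder (-x) (hnegmem hx)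
    have h2 : HasDerivWithinAt (fun u : ℝ => -u) (-1) (Icc (-α) r) x :=
      (hasDerivAt_neg x).hasDerivWithinAt
    have h3 := HasDerivWithinAt.comp x h1 h2 (fun u hu => hnegmem hu)
    have h4 : g' (-x) * (-1) = -(g' (-x)) := by ring
    rw [h4] at h3
    exact h3
  have hcontL : ContinuousOn (fun u => -(g' (-u))) (Icc (-α) r) := by
    have h1 : ContinuousOn (fun u : ℝ => g' (-u)) (Icc (-α) r) :=
      hcont'.comp continuous_neg.continuousOn (fun u hu => hnegmem hu)
    exact h1.neg
  have hlipL : ∀ x ∈ Icc (-α) r, ∀ y ∈ Icc (-α) r,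
      |-(g' (-x)) - -(g' (-y))| ≤ B * |x - y| := by
    intro x hx y hy
    have h1 := hlip (-x) (hnegmem hx) (-y) (hnegmem hy)
    have h2 : |-(g' (-x)) - -(g' (-y))| = |g' (-x) - g' (-y)| := by
      rw [← abs_neg]; ring_nf
    have h3 : |(-x) - (-y)| = |x - y| := by rw [← abs_neg]; ring_nf
    rw [h2]; rw [h3] at h1; exact h1
  have hα0L : -(g' (-(-α))) = 0 := by rw [neg_neg, hα', neg_zero]
  obtain ⟨aL, haLb, hQL0, hE1L, hdLder⟩ :=
    core (φ := fun u => g (-u)) (φ' := fun u => -(g' (-u))) hB hαR2 m hm rfl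
      hderL hcontL hlipL hα0L
  -- named one-sided sums
  obtain ⟨QRf, hQRf⟩ : ∃ q : ℝ → ℝ,
      ∀ w, q w = ∑ j : Fin m, aR j * max (w - (α + (j:ℕ) * ((r - α)/(m:ℝ)))) 0 :=
    ⟨_, fun _ => rfl⟩
  obtain ⟨QLf, hQLf⟩ : ∃ q : ℝ → ℝ,
      ∀ w, q w = ∑ j : Fin m, aL j * max (w - (-α + (j:ℕ) * ((r - -α)/(m:ℝ)))) 0 :=
    ⟨_, fun _ => rfl⟩
  have hQRfun : QRf = fun w => ∑ j : Fin m, aR j * max (w - (α + (j:ℕ) * ((r - α)/(m:ℝ)))) 0 :=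
    funext hQRf
  have hQLfun : QLf = fun w => ∑ j : Fin m, aL j * max (w - (-α + (j:ℕ) * ((r - -α)/(m:ℝ)))) 0 :=
    funext hQLf
  have hQR0' : ∀ z, z ≤ α → QRf z = 0 := fun z hz => by rw [hQRf]; exact hQR0 z hz
  have hQL0' : ∀ u, u ≤ -α → QLf u = 0 := fun u hu => by rw [hQLf]; exact hQL0 u hu
  have hE1R' : ∀ z ∈ Icc α r, |g z - g α - QRf z| ≤ B * ((r - α)/(m:ℝ))/2 * (z - α) :=
    fun z hz => by rw [hQRf]; exact hE1R z hz
  have hE1L' : ∀ u ∈ Icc (-α) r,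
      |g (-u) - g α - QLf u| ≤ B * ((r - -α)/(m:ℝ))/2 * (u - -α) := by
    intro u hu
    have h := hE1L u hu
    rw [← hQLf u] at h
    simpa [neg_neg] using h
  have hdR' : ∀ j : ℕ, j < m →
      ∀ z ∈ Ioo (α + (j:ℝ) * ((r - α)/(m:ℝ))) (α + ((j:ℝ)+1) * ((r - α)/(m:ℝ))),
      HasDerivAt QRf (g' (α + (j:ℝ) * ((r - α)/(m:ℝ)))) z := by
    intro j hj z hz
    rw [hQRfun]
    exact hdRder j hj z hz
  have hdL' : ∀ j : ℕ, j < m →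
      ∀ u ∈ Ioo (-α + (j:ℝ) * ((r - -α)/(m:ℝ))) (-α + ((j:ℝ)+1) * ((r - -α)/(m:ℝ))),
      HasDerivAt QLf (-(g' (-(-α + (j:ℝ) * ((r - -α)/(m:ℝ)))))) u := by
    intro j hj u hu
    rw [hQLfun]
    exact hdLder j hj u hu
  -- coefficient data as ℕ-indexed functions
  obtain ⟨AN, EN, BN, hA1, hA2, hE1f, hE2f, hB1f, hB2f⟩ :
      ∃ A E C : ℕ → ℝ,
        (∀ i (h : i < m), A i = aR ⟨i, h⟩) ∧ (∀ i (h : i < m), A (m+i) = aL ⟨i, h⟩) ∧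
        (∀ i, i < m → E i = 1) ∧ (∀ i, i < m → E (m+i) = -1) ∧
        (∀ i, i < m → C i = -(α + (i:ℝ) * ((r - α)/(m:ℝ)))) ∧
        (∀ i, i < m → C (m+i) = α - (i:ℝ) * ((r - -α)/(m:ℝ))) := by
    refine ⟨fun n => if h : n < m then aR ⟨n, h⟩
        else if h2 : n - m < m then aL ⟨n - m, h2⟩ else 0,
      fun n => if n < m then 1 else -1,
      fun n => if n < m then -(α + (n:ℝ) * ((r - α)/(m:ℝ)))
        else α - ((n - m : ℕ):ℝ) * ((r - -α)/(m:ℝ)),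
      fun i h => by simp [h], fun i h => ?_, fun i h => by simp [h], fun i h => ?_,
      fun i h => by simp [h], fun i h => ?_⟩
    · have h1 : ¬ (m + i < m) := by omega
      have h2 : m + i - m = i := by omega
      simp [h1, h2, h]
    · have h1 : ¬ (m + i < m) := by omega
      simp [h1]
    · have h1 : ¬ (m + i < m) := by omega
      have h2 : m + i - m = i := by omega
      simp [h1, h2, h]
  -- key splitting of the 2m-sum
  have hsum : ∀ w : ℝ, (∑ i : Fin (2*m), AN (i:ℕ) * max (EN (i:ℕ) * w + BN (i:ℕ)) 0)
      = QRf w + QLf (-w) := by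
    intro w
    rw [hQRf, hQLf]
    apply fin_two_split (F := fun n => AN n * max (EN n * w + BN n) 0)
    · intro j
      show AN (j:ℕ) * max (EN (j:ℕ) * w + BN (j:ℕ)) 0
          = aR j * max (w - (α + ((j:ℕ):ℝ) * ((r - α)/(m:ℝ)))) 0
      rw [hA1 _ j.isLt, hE1f _ j.isLt, hB1f _ j.isLt]
      rw [show (1:ℝ) * w + -(α + ((j:ℕ):ℝ) * ((r - α)/(m:ℝ)))
          = w - (α + ((j:ℕ):ℝ) * ((r - α)/(m:ℝ))) from by ring,
        show (⟨(j:ℕ), j.isLt⟩ : Fin m) = j from Fin.eta j j.isLt]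
    · intro j
      show AN (m + (j:ℕ)) * max (EN (m + (j:ℕ)) * w + BN (m + (j:ℕ))) 0
          = aL j * max ((-w) - (-α + ((j:ℕ):ℝ) * ((r - -α)/(m:ℝ)))) 0
      rw [hA2 _ j.isLt, hE2f _ j.isLt, hB2f _ j.isLt]
      rw [show (-1:ℝ) * w + (α - ((j:ℕ):ℝ) * ((r - -α)/(m:ℝ)))
          = (-w) - (-α + ((j:ℕ):ℝ) * ((r - -α)/(m:ℝ))) from by ring,
        show (⟨(j:ℕ), j.isLt⟩ : Fin m) = j from Fin.eta j j.isLt]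
  -- basic positivity
  have hlRpos : 0 < (r - α)/(m:ℝ) := div_pos (by linarith) hmR
  have hlLpos : 0 < (r - -α)/(m:ℝ) := div_pos (by linarith) hmR
  have hmlR : (m:ℝ) * ((r - α)/(m:ℝ)) = r - α := by field_simp
  have hmlL : (m:ℝ) * ((r - -α)/(m:ℝ)) = r - -α := by field_simp
  -- coefficient bounds
  have hcoef : ∀ i : Fin (2*m), |AN (i:ℕ)| ≤ 4 * r * B / m ∧
      (EN (i:ℕ) = 1 ∨ EN (i:ℕ) = -1) ∧ |BN (i:ℕ)| ≤ r := by
    intro i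
    rcases lt_or_ge ((i:ℕ)) m with h | h
    · refine ⟨?_, Or.inl (hE1f _ h), ?_⟩
      · rw [hA1 _ h]
        calc |aR ⟨(i:ℕ), h⟩| ≤ B * ((r - α)/(m:ℝ)) := haRb _
          _ ≤ 4 * r * B / m := by
              rw [show B * ((r - α)/(m:ℝ)) = B * (r - α) / m by ring,
                div_le_div_iff₀ hmR hmR]
              nlinarith [mul_le_mul_of_nonneg_left (show r - α ≤ 2*r by linarith) hB,
                mul_nonneg hB hrpos.le, hmR.le]
      · rw [hB1f _ h, abs_neg]
        have h1 : ((i:ℕ):ℝ) * ((r - α)/(m:ℝ)) ≤ (m:ℝ) * ((r - α)/(m:ℝ)) :=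
          mul_le_mul_of_nonneg_right (Nat.cast_le.mpr h.le) hlRpos.le
        rw [hmlR] at h1
        have h2 := mul_nonneg (Nat.cast_nonneg (i:ℕ) : (0:ℝ) ≤ ((i:ℕ):ℝ)) hlRpos.le
        rw [abs_le]
        constructor <;> linarith
    · obtain ⟨k, hk, hik⟩ : ∃ k, k < m ∧ (i:ℕ) = m + k :=
        ⟨(i:ℕ) - m, by omega, by omega⟩
      rw [hik]
      refine ⟨?_, Or.inr (hE2f _ hk), ?_⟩
      · rw [hA2 _ hk]
        calc |aL ⟨k, hk⟩| ≤ B * ((r - -α)/(m:ℝ)) := haLb _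
          _ ≤ 4 * r * B / m := by
              rw [show B * ((r - -α)/(m:ℝ)) = B * (r - -α) / m by ring,
                div_le_div_iff₀ hmR hmR]
              nlinarith [mul_le_mul_of_nonneg_left (show r - -α ≤ 2*r by linarith) hB,
                mul_nonneg hB hrpos.le, hmR.le]
      · rw [hB2f _ hk]
        have h1 : ((k:ℕ):ℝ) * ((r - -α)/(m:ℝ)) ≤ (m:ℝ) * ((r - -α)/(m:ℝ)) :=
          mul_le_mul_of_nonneg_right (Nat.cast_le.mpr hk.le) hlLpos.le
        rw [hmlL] at h1
        have h2 := mul_nonneg (Nat.cast_nonneg k : (0:ℝ) ≤ (k:ℝ)) hlLpos.le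
        rw [abs_le]
        constructor <;> linarith
  -- continuity of the network
  have hQRc : Continuous QRf := by
    rw [hQRfun]
    apply continuous_finset_sum
    intro j _
    exact continuous_const.mul ((continuous_id.sub continuous_const).max continuous_const)
  have hQLc : Continuous QLf := by
    rw [hQLfun]
    apply continuous_finset_sum
    intro j _
    exact continuous_const.mul ((continuous_id.sub continuous_const).max continuous_const)
  have hPc : Continuous (fun w => g α + (QRf w + QLf (-w))) :=
    continuous_const.add (hQRc.add (hQLc.comp continuous_neg))
  -- node memberships
  have hnodeRmem : ∀ x : ℝ, 0 ≤ x → x ≤ (m:ℝ) → α + x * ((r - α)/(m:ℝ)) ∈ Icc (-r) r := by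
    intro x hx0 hxm
    have h1 : x * ((r - α)/(m:ℝ)) ≤ (m:ℝ) * ((r - α)/(m:ℝ)) := mul_le_mul_of_nonneg_right hxm hlRpos.le
    rw [hmlR] at h1
    have h2 := mul_nonneg hx0 hlRpos.le
    exact ⟨by linarith, by linarith⟩
  have hnodeLmem : ∀ x : ℝ, 0 ≤ x → x ≤ (m:ℝ) → -α + x * ((r - -α)/(m:ℝ)) ∈ Icc (-α) r := by
    intro x hx0 hxm
    have h1 : x * ((r - -α)/(m:ℝ)) ≤ (m:ℝ) * ((r - -α)/(m:ℝ)) := mul_le_mul_of_nonneg_right hxm hlLpos.le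
    rw [hmlL] at h1
    have h2 := mul_nonneg hx0 hlLpos.le
    exact ⟨by linarith, by linarith⟩
  -- derivative identification, right side
  have hDright : ∀ j : ℕ, j < m →
      ∀ z ∈ Ioo (α + (j:ℝ) * ((r - α)/(m:ℝ))) (α + ((j:ℝ)+1) * ((r - α)/(m:ℝ))),
      deriv (fun w => g α + (QRf w + QLf (-w))) z = g' (α + (j:ℝ) * ((r - α)/(m:ℝ))) := by
    intro j hj z hz
    have hj0 : (0:ℝ) ≤ (j:ℝ) := Nat.cast_nonneg j
    have hzα : α < z := by
      have h2 := mul_nonneg hj0 hlRpos.le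
      have := hz.1
      linarith
    have hQLd : HasDerivAt (fun w : ℝ => QLf (-w)) 0 z := by
      apply (hasDerivAt_const z (0:ℝ)).congr_of_eventuallyEq
      filter_upwards [eventually_gt_nhds hzα] with w hw
      rw [hQL0' (-w) (by linarith)]
    have hQRd := hdR' j hj z hz
    have hP : HasDerivAt (fun w => g α + (QRf w + QLf (-w))) (g' (α + (j:ℝ) * ((r - α)/(m:ℝ))) + 0) z :=
      (hQRd.add hQLd).const_add (g α)
    rw [hP.deriv]
    ring
  -- derivative identification, left side
  have hDleft : ∀ j : ℕ, j < m →
      ∀ u ∈ Ioo (-α + (j:ℝ) * ((r - -α)/(m:ℝ))) (-α + ((j:ℝ)+1) * ((r - -α)/(m:ℝ))),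
      deriv (fun w => g α + (QRf w + QLf (-w))) (-u) = g' (-(-α + (j:ℝ) * ((r - -α)/(m:ℝ)))) := by
    intro j hj u hu
    have hj0 : (0:ℝ) ≤ (j:ℝ) := Nat.cast_nonneg j
    have huα : -α < u := by
      have h2 := mul_nonneg hj0 hlLpos.le
      have := hu.1
      linarith
    have hQLdc := hdL' j hj u hu
    have hQLdc2 : HasDerivAt QLf (-(g' (-(-α + (j:ℝ) * ((r - -α)/(m:ℝ)))))) (-(-u)) := by
      rw [neg_neg]; exact hQLdc
    have h1 : HasDerivAt (fun w : ℝ => QLf (-w))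
        (-(g' (-(-α + (j:ℝ) * ((r - -α)/(m:ℝ))))) * (-1)) (-u) := by
      have h2 := HasDerivAt.comp (-u) hQLdc2 (hasDerivAt_neg (-u))
      exact h2
    have hQRd : HasDerivAt QRf 0 (-u) := by
      apply (hasDerivAt_const (-u) (0:ℝ)).congr_of_eventuallyEq
      filter_upwards [eventually_lt_nhds (show -u < α by linarith)] with w hw
      rw [hQR0' w hw.le]
    have hP : HasDerivAt (fun w => g α + (QRf w + QLf (-w))) (0 + -(g' (-(-α + (j:ℝ) * ((r - -α)/(m:ℝ))))) * (-1)) (-u) :=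
      (hQRd.add h1).const_add (g α)
    rw [hP.deriv]
    ring
  -- one-sided data for the derivative error, right
  have honeR : ∀ j : ℕ, j < m →
      ∀ z ∈ Ioo (α + (j:ℝ) * ((r - α)/(m:ℝ))) (α + ((j:ℝ)+1) * ((r - α)/(m:ℝ))),
      deriv (fun w => g α + (QRf w + QLf (-w))) z = g' (α + (j:ℝ) * ((r - α)/(m:ℝ))) ∧
      |g' z - g' (α + (j:ℝ) * ((r - α)/(m:ℝ)))| ≤ B * (z - (α + (j:ℝ) * ((r - α)/(m:ℝ)))) := by
    intro j hj z hz
    have hj0 : (0:ℝ) ≤ (j:ℝ) := Nat.cast_nonneg j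
    have hjm : (j:ℝ) ≤ (m:ℝ) := Nat.cast_le.mpr hj.le
    have hjm1 : (j:ℝ) + 1 ≤ (m:ℝ) := by
      have : ((j+1 : ℕ):ℝ) ≤ (m:ℝ) := Nat.cast_le.mpr (by omega)
      push_cast at this
      linarith
    have hnj := hnodeRmem (j:ℝ) hj0 hjm
    have hnj1 := hnodeRmem ((j:ℝ)+1) (by linarith) hjm1
    have hzmem : z ∈ Icc (-r) r := ⟨by linarith [hz.1, hnj.1], by linarith [hz.2, hnj1.2]⟩
    refine ⟨hDright j hj z hz, ?_⟩
    have h1 := hlip z hzmem _ hnj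
    calc |g' z - g' (α + (j:ℝ) * ((r - α)/(m:ℝ)))| ≤ B * |z - (α + (j:ℝ) * ((r - α)/(m:ℝ)))| := h1
      _ = B * (z - (α + (j:ℝ) * ((r - α)/(m:ℝ)))) := by
          rw [abs_of_nonneg (by linarith [hz.1])]
  -- one-sided data for the derivative error, left (reflected variable)
  have honeL : ∀ j : ℕ, j < m →
      ∀ u ∈ Ioo (-α + (j:ℝ) * ((r - -α)/(m:ℝ))) (-α + ((j:ℝ)+1) * ((r - -α)/(m:ℝ))),
      -(deriv (fun w => g α + (QRf w + QLf (-w))) (-u)) = -(g' (-(-α + (j:ℝ) * ((r - -α)/(m:ℝ))))) ∧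
      |-(g' (-u)) - -(g' (-(-α + (j:ℝ) * ((r - -α)/(m:ℝ)))))| ≤ B * (u - (-α + (j:ℝ) * ((r - -α)/(m:ℝ)))) := by
    intro j hj u hu
    have hj0 : (0:ℝ) ≤ (j:ℝ) := Nat.cast_nonneg j
    have hjm : (j:ℝ) ≤ (m:ℝ) := Nat.cast_le.mpr hj.le
    have hjm1 : (j:ℝ) + 1 ≤ (m:ℝ) := by
      have : ((j+1 : ℕ):ℝ) ≤ (m:ℝ) := Nat.cast_le.mpr (by omega)
      push_cast at this
      linarith
    have hnj := hnodeLmem (j:ℝ) hj0 hjm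
    have hnj1 := hnodeLmem ((j:ℝ)+1) (by linarith) hjm1
    have humem : u ∈ Icc (-α) r := ⟨by linarith [hu.1, hnj.1], by linarith [hu.2, hnj1.2]⟩
    constructor
    · rw [hDleft j hj u hu]
    · have h1 := hlip (-(-α + (j:ℝ) * ((r - -α)/(m:ℝ)))) (hnegmem hnj) (-u) (hnegmem humem)
      have h2 : |-(g' (-u)) - -(g' (-(-α + (j:ℝ) * ((r - -α)/(m:ℝ)))))|
          = |g' (-(-α + (j:ℝ) * ((r - -α)/(m:ℝ)))) - g' (-u)| := by
        rw [show -(g' (-u)) - -(g' (-(-α + (j:ℝ) * ((r - -α)/(m:ℝ)))))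
            = -(g' (-u) - g' (-(-α + (j:ℝ) * ((r - -α)/(m:ℝ))))) from by ring,
          abs_neg, abs_sub_comm]
      have h3 : |(-(-α + (j:ℝ) * ((r - -α)/(m:ℝ)))) - (-u)| = u - (-α + (j:ℝ) * ((r - -α)/(m:ℝ))) := by
        rw [abs_of_nonneg (by linarith [hu.1])]
        ring
      rw [h2]
      calc |g' (-(-α + (j:ℝ) * ((r - -α)/(m:ℝ)))) - g' (-u)|
          ≤ B * |(-(-α + (j:ℝ) * ((r - -α)/(m:ℝ)))) - (-u)| := h1
        _ = B * (u - (-α + (j:ℝ) * ((r - -α)/(m:ℝ)))) := by rw [h3]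
  -- sideE2 on the right
  obtain ⟨hIIR, hvalR⟩ := sideE2 (ψ := g') (D := deriv (fun w => g α + (QRf w + QLf (-w))))
    hB hαR hm rfl (fun j => g' (α + (j:ℝ) * ((r - α)/(m:ℝ)))) (hcont'.mono hsubR) honeR
  -- sideE2 on the left (reflected)
  obtain ⟨hIIL0, hvalL⟩ := sideE2 (ψ := fun u => -(g' (-u)))
    (D := fun u => -(deriv (fun w => g α + (QRf w + QLf (-w))) (-u)))
    hB hαR2 hm rfl (fun j => -(g' (-(-α + (j:ℝ) * ((r - -α)/(m:ℝ)))))) hcontL honeL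
  have hfneg : (fun u => (-(g' (-u)) - -(deriv (fun w => g α + (QRf w + QLf (-w))) (-u)))^2)
      = (fun u => (g' (-u) - deriv (fun w => g α + (QRf w + QLf (-w))) (-u))^2) := by
    funext u; ring
  rw [hfneg] at hIIL0 hvalL
  have hIIL : IntervalIntegrable (fun z => (g' z - deriv (fun w => g α + (QRf w + QLf (-w))) z)^2) volume (-r) α := by
    have h0 : IntervalIntegrable (fun x => (g' (-x) - deriv (fun w => g α + (QRf w + QLf (-w))) (-x))^2)
        volume (-α) (-(-r)) := by
      rw [neg_neg]; exact hIIL0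
    exact ((IntervalIntegrable.iff_comp_neg
      (f := (fun z => (g' z - deriv (fun w => g α + (QRf w + QLf (-w))) z)^2)) (a := α) (b := -r)).mpr h0).symm
  have hvalL2 : ∫ z in (-r)..α, (g' z - deriv (fun w => g α + (QRf w + QLf (-w))) z)^2
      ≤ B^2 * ((r - -α)/(m:ℝ))^2 * (r - -α) / 3 := by
    have hcomp := intervalIntegral.integral_comp_neg (a := -α) (b := r) (fun z => (g' z - deriv (fun w => g α + (QRf w + QLf (-w))) z)^2)
    rw [neg_neg] at hcomp
    rw [← hcomp]
    exact hvalL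
  -- f1 integrability and bounds
  have hf1cont : ContinuousOn (fun z => (g z - (g α + (QRf z + QLf (-z))))^2) (Icc (-r) r) :=
    ((hgc.sub hPc.continuousOn).pow 2)
  have hIIf1R : IntervalIntegrable (fun z => (g z - (g α + (QRf z + QLf (-z))))^2) volume α r := by
    apply ContinuousOn.intervalIntegrable
    rw [uIcc_of_le hαR.le]
    exact hf1cont.mono hsubR
  have hIIf1L : IntervalIntegrable (fun z => (g z - (g α + (QRf z + QLf (-z))))^2) volume (-r) α := by
    apply ContinuousOn.intervalIntegrable
    rw [uIcc_of_le (show -r ≤ α by linarith)]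
    exact hf1cont.mono (Icc_subset_Icc le_rfl (by linarith))
  have hvalf1R : ∫ z in α..r, (g z - (g α + (QRf z + QLf (-z))))^2
      ≤ (B * ((r - α)/(m:ℝ))/2)^2 * ((r - α)^3 - (α - α)^3)/3 := by
    rw [← integ_sq α r α ((B * ((r - α)/(m:ℝ))/2)^2)]
    apply intervalIntegral.integral_mono_on hαR.le hIIf1R
      (Continuous.intervalIntegrable
        (continuous_const.mul ((continuous_id.sub continuous_const).pow 2)) _ _)
    intro z hz
    have h0 : QLf (-z) = 0 := hQL0' _ (by linarith [hz.1])
    have h1 := hE1R' z ⟨hz.1, hz.2⟩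
    have h2 : g z - (g α + (QRf z + QLf (-z))) = g z - g α - QRf z := by
      rw [h0]; ring
    rw [h2]
    have h3 := abs_le.1 h1
    calc (g z - g α - QRf z)^2 ≤ (B * ((r - α)/(m:ℝ))/2 * (z - α))^2 :=
        sq_le_sq' (by linarith [h3.1]) h3.2
      _ = (B * ((r - α)/(m:ℝ))/2)^2 * (z - α)^2 := by ring
  have hvalf1L : ∫ z in (-r)..α, (g z - (g α + (QRf z + QLf (-z))))^2
      ≤ (B * ((r - -α)/(m:ℝ))/2)^2 * ((r - -α)^3 - ((-α) - -α)^3)/3 := by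
    have hcomp := intervalIntegral.integral_comp_neg (a := -α) (b := r) (fun z => (g z - (g α + (QRf z + QLf (-z))))^2)
    rw [neg_neg] at hcomp
    rw [← hcomp]
    have hIIf1n : IntervalIntegrable (fun u => (g (-u) - (g α + (QRf (-u) + QLf (-(-u)))))^2)
        volume (-α) r := by
      apply ContinuousOn.intervalIntegrable
      rw [uIcc_of_le hαR2.le]
      exact hf1cont.comp continuous_neg.continuousOn (fun u hu => hnegmem hu)
    rw [← integ_sq (-α) r (-α) ((B * ((r - -α)/(m:ℝ))/2)^2)]
    apply intervalIntegral.integral_mono_on hαR2.le hIIf1n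
      (Continuous.intervalIntegrable
        (continuous_const.mul ((continuous_id.sub continuous_const).pow 2)) _ _)
    intro u hu
    have h0 : QRf (-u) = 0 := hQR0' _ (by linarith [hu.1])
    have h1 := hE1L' u ⟨hu.1, hu.2⟩
    have h2 : g (-u) - (g α + (QRf (-u) + QLf (-(-u)))) = g (-u) - g α - QLf u := by
      rw [h0, neg_neg]; ring
    rw [h2]
    have h3 := abs_le.1 h1
    calc (g (-u) - g α - QLf u)^2 ≤ (B * ((r - -α)/(m:ℝ))/2 * (u - -α))^2 :=
        sq_le_sq' (by linarith [h3.1]) h3.2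
      _ = (B * ((r - -α)/(m:ℝ))/2)^2 * (u - -α)^2 := by ring
  -- split the Icc integrals
  have hseteq1 : ∫ z in Icc (-r) r, (g z - (g α + (QRf z + QLf (-z))))^2
      = (∫ z in (-r)..α, (g z - (g α + (QRf z + QLf (-z))))^2)
        + ∫ z in α..r, (g z - (g α + (QRf z + QLf (-z))))^2 := by
    rw [integral_Icc_eq_integral_Ioc,
      ← intervalIntegral.integral_of_le (show (-r:ℝ) ≤ r by linarith),
      ← intervalIntegral.integral_add_adjacent_intervals hIIf1L hIIf1R]
  have hseteq2 : ∫ z in Icc (-r) r, (g' z - deriv (fun w => g α + (QRf w + QLf (-w))) z)^2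
      = (∫ z in (-r)..α, (g' z - deriv (fun w => g α + (QRf w + QLf (-w))) z)^2)
        + ∫ z in α..r, (g' z - deriv (fun w => g α + (QRf w + QLf (-w))) z)^2 := by
    rw [integral_Icc_eq_integral_Ioc,
      ← intervalIntegral.integral_of_le (show (-r:ℝ) ≤ r by linarith),
      ← intervalIntegral.integral_add_adjacent_intervals hIIL hIIR]
  -- numeric combination
  have hm0 : ((m:ℝ)) ≠ 0 := ne_of_gt hmR
  have e1 : (B * ((r - -α)/(m:ℝ))/2)^2 * ((r - -α)^3 - ((-α) - -α)^3)/3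
      = B^2 * (r - -α)^5 / (12*(m:ℝ)^2) := by
    field_simp
    ring
  have e2 : (B * ((r - α)/(m:ℝ))/2)^2 * ((r - α)^3 - (α - α)^3)/3
      = B^2 * (r - α)^5 / (12*(m:ℝ)^2) := by
    field_simp
    ring
  have e3 : B^2 * ((r - -α)/(m:ℝ))^2 * (r - -α)/3 = B^2 * (r - -α)^3/(3*(m:ℝ)^2) := by
    field_simp
  have e4 : B^2 * ((r - α)/(m:ℝ))^2 * (r - α)/3 = B^2 * (r - α)^3/(3*(m:ℝ)^2) := by
    field_simp
  rw [e1] at hvalf1L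
  rw [e2] at hvalf1R
  rw [e3] at hvalL2
  rw [e4] at hvalR
  have hsq : α^2 ≤ r^2 := by
    nlinarith [mul_pos (show (0:ℝ) < r - α by linarith) (show (0:ℝ) < r + α by linarith)]
  have h4p : α^4 ≤ r^4 := by nlinarith [hsq, sq_nonneg α, sq_nonneg r]
  have h3p : (r - α)^3 + (r - -α)^3 ≤ 8*r^3 := by
    nlinarith [mul_le_mul_of_nonneg_left hsq hrpos.le]
  have h5p : (r - α)^5 + (r - -α)^5 ≤ 32*r^5 := by
    nlinarith [mul_le_mul_of_nonneg_left hsq (pow_nonneg hrpos.le 3),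
      mul_le_mul_of_nonneg_left h4p hrpos.le, hrpos]
  have hr35 : r^3 ≤ r^5 := by
    nlinarith [pow_nonneg hrpos.le 3, hr1, mul_le_mul_of_nonneg_left
      (show (1:ℝ) ≤ r^2 by nlinarith [hr1]) (pow_nonneg hrpos.le 3)]
  have hBM : (0:ℝ) ≤ B^2 / (m:ℝ)^2 := by positivity
  have hfin : B^2 * (r - -α)^5 / (12*(m:ℝ)^2) + B^2 * (r - α)^5 / (12*(m:ℝ)^2)
      + B^2 * (r - -α)^3/(3*(m:ℝ)^2) + B^2 * (r - α)^3/(3*(m:ℝ)^2)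
      ≤ 10 * B^2 * r^5 / (m:ℝ)^2 := by
    have hstep : ((r - α)^5 + (r - -α)^5)/12 + ((r - α)^3 + (r - -α)^3)/3 ≤ 10*r^5 := by
      have := pow_nonneg hrpos.le 5
      linarith [h5p, h3p, hr35]
    calc B^2 * (r - -α)^5 / (12*(m:ℝ)^2) + B^2 * (r - α)^5 / (12*(m:ℝ)^2)
          + B^2 * (r - -α)^3/(3*(m:ℝ)^2) + B^2 * (r - α)^3/(3*(m:ℝ)^2)
        = B^2/(m:ℝ)^2 * (((r - α)^5 + (r - -α)^5)/12 + ((r - α)^3 + (r - -α)^3)/3) := by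
          ring
      _ ≤ B^2/(m:ℝ)^2 * (10*r^5) := mul_le_mul_of_nonneg_left hstep hBM
      _ = 10 * B^2 * r^5 / (m:ℝ)^2 := by ring
  have htot : (∫ z in Icc (-r) r, (g z - (g α + (QRf z + QLf (-z))))^2)
      + (∫ z in Icc (-r) r, (g' z - deriv (fun w => g α + (QRf w + QLf (-w))) z)^2) ≤ 10 * B^2 * r^5 / (m:ℝ)^2 := by
    rw [hseteq1, hseteq2]
    linarith [hvalf1L, hvalf1R, hvalL2, hvalR, hfin]
  -- the square-root identity
  have hd0 : (0:ℝ) ≤ (d:ℝ) := Nat.cast_nonneg d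
  have h54 : ((d:ℝ)^((5:ℝ)/4))^2 = r^5 := by
    rw [hr, Real.sqrt_eq_rpow]
    rw [← Real.rpow_natCast ((d:ℝ)^((5:ℝ)/4)) 2, ← Real.rpow_natCast ((d:ℝ)^((1:ℝ)/2)) 5,
      ← Real.rpow_mul hd0, ← Real.rpow_mul hd0]
    norm_num
  have hRHS0 : (0:ℝ) ≤ Real.sqrt 10 * (d:ℝ)^((5:ℝ)/4) * B / m :=
    div_nonneg (mul_nonneg (mul_nonneg (Real.sqrt_nonneg 10)
      (Real.rpow_nonneg hd0 _)) hB) (Nat.cast_nonneg m)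
  have hrhs2 : (Real.sqrt 10 * (d:ℝ)^((5:ℝ)/4) * B / m)^2 = 10 * B^2 * r^5 / (m:ℝ)^2 := by
    rw [div_pow, mul_pow, mul_pow, Real.sq_sqrt (by norm_num : (0:ℝ) ≤ 10), h54]
    ring
  -- finish
  refine ⟨g α, fun i => AN (i:ℕ), fun i => EN (i:ℕ), fun i => BN (i:ℕ),
    hg0 α ⟨by linarith, by linarith⟩, ?_, ?_⟩
  · intro i
    exact ⟨(hcoef i).1, (hcoef i).2.1, (hcoef i).2.2⟩
  · simp only [hsum]
    calc Real.sqrt ((∫ z in Icc (-r) r, (g z - (g α + (QRf z + QLf (-z))))^2)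
          + ∫ z in Icc (-r) r, (g' z - deriv (fun w => g α + (QRf w + QLf (-w))) z)^2)
        ≤ Real.sqrt (10 * B^2 * r^5 / (m:ℝ)^2) := Real.sqrt_le_sqrt htot
      _ = Real.sqrt ((Real.sqrt 10 * (d:ℝ)^((5:ℝ)/4) * B / m)^2) := by rw [hrhs2]
      _ = Real.sqrt 10 * (d:ℝ)^((5:ℝ)/4) * B / m := Real.sqrt_sq hRHS0
end
end
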